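/- arXiv:2502.09220 — 7 statements merged into one kernel-verified Lean document; each statement's English description precedes it below -/
import Mathlib

section
/- For any finite ground normal logic program P with encoded Boolean network f, the influence graph of f is a subgraph of the dependency graph of P: every positive (resp. negative) arc of ig(f) is a positive (resp. negative) arc of dg(P). -/
/-- Three truth values: false, unknown, true. -/
inductive TV3 | fls | unk | tru
  deriving DecidableEq

namespace TV3

def toFin : TV3 → Fin 3
  | fls => 0 | unk => 1 | tru => 2

/-- The truth order f < u < t. -/
instance : LinearOrder TV3 :=
  LinearOrder.lift' toFin (by intro a b h; cases a <;> cases b <;> simp_all [toFin])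

instance : BoundedOrder TV3 where
  top := tru
  bot := fls
  le_top x := by cases x <;> decide
  bot_le x := by cases x <;> decide

/-- Kleene negation. -/
def neg : TV3 → TV3 | fls => tru | unk => unk | tru => fls

end TV3

def ofBool : Bool → TV3 | true => .tru | false => .fls

/-- The subset order on truth values: f <ₛ u and t <ₛ u. -/
def leS (x y : TV3) : Prop := x = y ∨ y = TV3.unk

section LP

variable {A : Type*} [Fintype A] [DecidableEq A]

/-- Pointwise subset order on 3-valued interpretations. -/
def leSI (I₁ I₂ : A → TV3) : Prop := ∀ a, leS (I₁ a) (I₂ a)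

/-- The set of 2-valued interpretations compatible with a 3-valued one. -/
def gamma (I : A → TV3) : Set (A → Bool) :=
  {J | ∀ a, I a ≠ TV3.unk → ofBool (J a) = I a}

/-- A ground normal rule: head ← pos, ∼neg. -/
structure Rule (A : Type*) where
  head : A
  pos : Finset A
  neg : Finset A
  deriving DecidableEq

/-- A finite ground normal logic program. -/
abbrev Program (A : Type*) [DecidableEq A] := Finset (Rule A)

/-- Immediate consequence operator T_P. -/
def TP (P : Program A) (J : A → Bool) (a : A) : Bool :=
  decide (∃ r ∈ P, r.head = a ∧ (∀ p ∈ r.pos, J p = true) ∧ (∀ q ∈ r.neg, J q = false))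

/-- 2-valued value of the body formula of a rule. -/
noncomputable def bodyVal2 (r : Rule A) (s : A → Bool) : Bool :=
  (r.pos.inf s) && !(r.neg.sup s)

/-- The Boolean network encoding of a program: f_v = ⋁_{head r = v} body-formula(r). -/
noncomputable def encBN (P : Program A) : A → (A → Bool) → Bool :=
  fun v s => P.sup fun r => if r.head = v then bodyVal2 r s else false

/-- 3-valued (Kleene) value of the body formula of a rule. -/
def bodyVal3 (r : Rule A) (I : A → TV3) : TV3 :=
  (r.pos.inf I) ⊓ (r.neg.inf fun q => TV3.neg (I q))

/-- 3-valued evaluation of rhs(a), the disjunction of bodies of rules with head a. -/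
def rhs3 (P : Program A) (I : A → TV3) (a : A) : TV3 :=
  P.sup fun r => if r.head = a then bodyVal3 r I else TV3.fls

/-- Signs of arcs. -/
inductive Sign | pos | neg
  deriving DecidableEq

/-- A signed directed graph on A. -/
abbrev SGraph (A : Type*) := A → A → Sign → Prop

def posArc (P : Program A) (u v : A) : Prop := ∃ r ∈ P, r.head = v ∧ u ∈ r.pos
def negArc (P : Program A) (u v : A) : Prop := ∃ r ∈ P, r.head = v ∧ u ∈ r.neg

/-- Dependency graph of a program. -/
def dg (P : Program A) : SGraph A := fun u v s =>
  match s with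
  | Sign.pos => posArc P u v
  | Sign.neg => negArc P u v

/-- Influence graph of a Boolean network. -/
def ig (f : A → (A → Bool) → Bool) : SGraph A := fun u v s =>
  match s with
  | Sign.pos => ∃ x : A → Bool, f v (Function.update x u false) < f v (Function.update x u true)
  | Sign.neg => ∃ x : A → Bool, f v (Function.update x u true) < f v (Function.update x u false)

/-- A (closed signed) cycle in a signed graph: vertices v₀,…,vₙ with arcs
vᵢ → vᵢ₊₁ (indices mod n+1) carrying the given signs. -/
structure SCycle (G : SGraph A) where
  n : ℕ
  vtx : Fin (n + 1) → A
  sgn : Fin (n + 1) → Sign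
  arc : ∀ i, G (vtx i) (vtx (i + 1)) (sgn i)

/-- A cycle is negative if it has an odd number of negative arcs. -/
def SCycle.IsNeg {G : SGraph A} (c : SCycle G) : Prop :=
  (Finset.univ.filter fun i => c.sgn i = Sign.neg).card % 2 = 1

/-- A cycle is positive if it has an even number of negative arcs. -/
def SCycle.IsPos {G : SGraph A} (c : SCycle G) : Prop :=
  (Finset.univ.filter fun i => c.sgn i = Sign.neg).card % 2 = 0

/-- U is a positive feedback vertex set: it meets every positive cycle. -/
def IsPFVS (G : SGraph A) (U : Finset A) : Prop :=
  ∀ c : SCycle G, c.IsPos → ∃ i, c.vtx i ∈ U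

/-- P is tight: its positive dependency graph is acyclic. -/
def Tight (P : Program A) : Prop :=
  IsEmpty (SCycle (fun u v s => s = Sign.pos ∧ posArc P u v))

/-- Synchronous update of a Boolean network. -/
def syncNext (f : A → (A → Bool) → Bool) (x : A → Bool) : A → Bool := fun v => f v x

/-- Fully asynchronous transition. -/
def asyncStep (f : A → (A → Bool) → Bool) (x y : A → Bool) : Prop :=
  ∃ v, f v x ≠ x v ∧ y = Function.update x v (f v x)

/-- Nonempty trap set of the asynchronous state transition graph. -/
def IsTrapSet (f : A → (A → Bool) → Bool) (S : Set (A → Bool)) : Prop :=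
  S.Nonempty ∧ ∀ x ∈ S, ∀ y, asyncStep f x y → y ∈ S

/-- Attractor: subset-minimal nonempty trap set. -/
def IsAttractor (f : A → (A → Bool) → Bool) (S : Set (A → Bool)) : Prop :=
  IsTrapSet f S ∧ ∀ T, IsTrapSet f T → T ⊆ S → T = S

def IsFixedPoint (f : A → (A → Bool) → Bool) (x : A → Bool) : Prop :=
  syncNext f x = x

/-- Trap space of a BN under synchronous update. -/
def IsSyncTrapSpace (f : A → (A → Bool) → Bool) (m : A → TV3) : Prop :=
  ∀ s ∈ gamma m, syncNext f s ∈ gamma m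

/-- Trap space of a BN under asynchronous update. -/
def IsAsyncTrapSpace (f : A → (A → Bool) → Bool) (m : A → TV3) : Prop :=
  ∀ s ∈ gamma m, ∀ y, asyncStep f s y → y ∈ gamma m

/-- Supported trap space: γ(I) is closed under T_P. -/
def IsSuppTrapSpace (P : Program A) (I : A → TV3) : Prop :=
  ∀ J ∈ gamma I, TP P J ∈ gamma I

/-- Supported partial model: 3-valued model of Clark's completion. -/
def IsSuppPartialModel (P : Program A) (I : A → TV3) : Prop :=
  ∀ a, I a = rhs3 P I a

/-- The 3-valued one-step operator of the Przymusinski reduct P^I applied to K: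
negative literals are evaluated under I (Kleene negation), positive ones under K. -/
def Phi (P : Program A) (I K : A → TV3) (a : A) : TV3 :=
  P.sup fun r =>
    if r.head = a then (r.pos.inf K) ⊓ (r.neg.inf fun q => TV3.neg (I q)) else TV3.fls

/-- Stable partial model: I is the ≤ₜ-least 3-valued model of the reduct P^I. -/
def IsStablePartial (P : Program A) (I : A → TV3) : Prop :=
  (∀ a, Phi P I I a ≤ I a) ∧
    ∀ K : A → TV3, (∀ a, Phi P I K a ≤ K a) → ∀ a, I a ≤ K a

/-- Regular model: ≤ₛ-minimal stable partial model. -/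
def IsRegularModel (P : Program A) (I : A → TV3) : Prop :=
  IsStablePartial P I ∧ ∀ I', IsStablePartial P I' → leSI I' I → I' = I

def Is2Valued (I : A → TV3) : Prop := ∀ a, I a ≠ TV3.unk

/-- The one-step operator of the Gelfond–Lifschitz reduct P^J applied to K. -/
noncomputable def PhiB (P : Program A) (J K : A → Bool) (a : A) : Bool :=
  P.sup fun r =>
    if r.head = a then ((r.pos.inf K) && !(r.neg.sup J)) else false

/-- Stable model: J is the least model of the Gelfond–Lifschitz reduct P^J. -/
def IsStableModel (P : Program A) (J : A → Bool) : Prop :=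
  (∀ a, PhiB P J J a ≤ J a) ∧
    ∀ K : A → Bool, (∀ a, PhiB P J K a ≤ K a) → ∀ a, J a ≤ K a

/-- Every cycle of dg(P) contains no negative arc. -/
def LocallyStratified (P : Program A) : Prop :=
  ∀ c : SCycle (dg P), ∀ i, c.sgn i ≠ Sign.neg

def NoNegCycle (G : SGraph A) : Prop := ∀ c : SCycle G, ¬ c.IsNeg
def NoPosCycle (G : SGraph A) : Prop := ∀ c : SCycle G, ¬ c.IsPos

end LP

/-! `f_v` is monotone in every atom that occurs only positively in the bodies of the rules with
head `v`, and antitone in every atom that occurs only negatively there. So a state in which raising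
`u` raises (lowers) `f_v` forces `u` into some positive (negative) body of a rule with head `v`. -/

theorem bodyVal2_le_bodyVal2 {A : Type*} {r : Rule A} {x y : A → Bool}
    (hpos : ∀ p ∈ r.pos, x p ≤ y p) (hneg : ∀ q ∈ r.neg, y q ≤ x q) :
    bodyVal2 r x ≤ bodyVal2 r y :=
  inf_le_inf (Finset.inf_mono_fun hpos) (compl_le_compl (Finset.sup_mono_fun hneg))

section Monotonicity

variable {A : Type*} [DecidableEq A] {P : Program A} {u v : A}

theorem encBN_le_encBN {x y : A → Bool}
    (h : ∀ r ∈ P, r.head = v → (∀ p ∈ r.pos, x p ≤ y p) ∧ ∀ q ∈ r.neg, y q ≤ x q) :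
    encBN P v x ≤ encBN P v y := by
  refine Finset.sup_mono_fun fun r hr => ?_
  split_ifs with hv
  · exact bodyVal2_le_bodyVal2 (h r hr hv).1 (h r hr hv).2
  · exact le_rfl

theorem encBN_update_true_le_of_not_posArc (hu : ¬posArc P u v) (x : A → Bool) :
    encBN P v (Function.update x u true) ≤ encBN P v (Function.update x u false) := by
  refine encBN_le_encBN fun r hr hv => ⟨fun p hp => ?_, fun q _ => ?_⟩
  · have hpu : p ≠ u := by rintro rfl; exact hu ⟨r, hr, hv, hp⟩
    simp only [Function.update_of_ne hpu, le_rfl]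
  · exact update_le_update_iff'.mpr (Bool.false_le true) q

theorem encBN_update_false_le_of_not_negArc (hu : ¬negArc P u v) (x : A → Bool) :
    encBN P v (Function.update x u false) ≤ encBN P v (Function.update x u true) := by
  refine encBN_le_encBN fun r hr hv => ⟨fun p _ => ?_, fun q hq => ?_⟩
  · exact update_le_update_iff'.mpr (Bool.false_le true) p
  · have hqu : q ≠ u := by rintro rfl; exact hu ⟨r, hr, hv, hq⟩
    simp only [Function.update_of_ne hqu, le_rfl]

end Monotonicity

theorem stmt1_general {A : Type*} [DecidableEq A] (P : Program A)
    (u v : A) (s : Sign) (h : ig (encBN P) u v s) : dg P u v s := by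
  by_contra hu
  cases s with
  | pos =>
    obtain ⟨x, hx⟩ := h
    exact hx.not_ge (encBN_update_true_le_of_not_posArc hu x)
  | neg =>
    obtain ⟨x, hx⟩ := h
    exact hx.not_ge (encBN_update_false_le_of_not_negArc hu x)

/-- the influence graph of the encoded BN is a subgraph of the
dependency graph of the program. -/
theorem stmt1 {A : Type*} [Fintype A] [DecidableEq A] (P : Program A)
    (u v : A) (s : Sign) (h : ig (encBN P) u v s) : dg P u v s :=
  stmt1_general P u v s h
end

section
/- If the influence graph of a Boolean network f on finitely many variables has no cycle (positive or negative), then f has a unique fixed point, and the fully asynchronous state transition graph of f has a unique attractor, which is that fixed point. -/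
/-! If `f v` genuinely depends on `x u`, the influence graph has an arc `u → v`; on a finite set
with no cycles this regulation relation is therefore well-founded, and well-founded recursion
along it computes a fixed point `x`. From a state `y ≠ x`, a variable `v` minimal among those
where `y` and `x` disagree has all its regulators in agreement with `x`, so `f v y = x v ≠ y v`,
and updating `v` brings `y` one step closer to `x` in Hamming distance. Hence `x` is reachable
from every state: it lies in every trap set, it is the only fixed point, and `{x}` is the only
attractor. -/

section EssentialVariables

variable {ι γ : Type*} [DecidableEq ι]

def IsEssentialVar (g : (ι → Bool) → γ) (u : ι) : Prop :=
  ∃ x, g (Function.update x u false) ≠ g (Function.update x u true)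

lemma apply_update_of_not_isEssentialVar {g : (ι → Bool) → γ} {u : ι}
    (hu : ¬ IsEssentialVar g u) (x : ι → Bool) (b : Bool) :
    g (Function.update x u b) = g x := by
  simp only [IsEssentialVar, not_exists, not_not] at hu
  have hb : ∀ c, g (Function.update x u c) = g (Function.update x u false) := by
    rintro (_ | _)
    exacts [rfl, (hu x).symm]
  rw [hb, ← hb (x u), Function.update_eq_self]

lemma dependsOn_setOf_isEssentialVar [Finite ι] (g : (ι → Bool) → γ) :
    DependsOn g {u | IsEssentialVar g u} := by
  have := Fintype.ofFinite ι
  intro x y hxy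
  have hpiecewise : ∀ s : Finset ι, g (s.piecewise y x) = g x := by
    intro s
    induction s using Finset.induction_on with
    | empty => rw [Finset.piecewise_empty]
    | insert a s _ ih =>
      rw [Finset.piecewise_insert, ← ih]
      by_cases ha : IsEssentialVar g a
      · congr 1
        rw [Function.update_eq_self_iff]
        simp [Finset.piecewise, hxy a ha]
      · exact apply_update_of_not_isEssentialVar ha _ _
  simpa using (hpiecewise Finset.univ).symm

end EssentialVariables

lemma hammingDist_update_lt {ι β : Type*} [Fintype ι] [DecidableEq ι] [DecidableEq β]
    {x y : ι → β} {v : ι} (hv : y v ≠ x v) :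
    hammingDist (Function.update y v (x v)) x < hammingDist y x := by
  refine Finset.card_lt_card <|
    (Finset.ssubset_iff_of_subset fun w => ?_).2 ⟨v, by simpa using hv, by simp⟩
  by_cases hw : w = v <;> simp [hw]

lemma SCycle.wellFounded_of_isEmpty {A : Type*} [Finite A] {G : SGraph A} {r : A → A → Prop}
    (hr : ∀ {u v}, r u v → ∃ σ, G u v σ) (h : IsEmpty (SCycle G)) : WellFounded r := by
  refine wellFounded_iff_isEmpty_descending_chain.2 ⟨fun ⟨s, hs⟩ => ?_⟩
  obtain ⟨i, j, hij, hsij⟩ :=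
    Set.finite_univ.exists_lt_map_eq_of_forall_mem (f := s) fun _ => Set.mem_univ _
  obtain ⟨n, hj⟩ : ∃ n, j = i + n + 1 := ⟨j - i - 1, by omega⟩
  -- the arcs of the descending chain run from `s j` down to `s i = s j`, closing a cycle
  have harc : ∀ t : Fin (n + 1), ∃ σ, G (s (j - t)) (s (j - ↑(t + 1))) σ := by
    intro t
    rw [Fin.val_add_one]
    split_ifs with ht
    · have := hr (hs i)
      rwa [ht, Fin.val_last, Nat.sub_zero, ← hsij, show j - n = i + 1 by omega]
    · have := hr (hs (j - (t + 1)))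
      rwa [show j - (t + 1) + 1 = j - t by omega] at this
  choose σ hσ using harc
  exact h.false ⟨n, fun t => s (j - t), σ, hσ⟩

section Network

variable {A : Type*} [DecidableEq A] {f : A → (A → Bool) → Bool}

def Regulates (f : A → (A → Bool) → Bool) (u v : A) : Prop := IsEssentialVar (f v) u

lemma Regulates.exists_ig {u v : A} (h : Regulates f u v) : ∃ σ, ig f u v σ := by
  obtain ⟨x, hx⟩ := h
  rcases hx.lt_or_gt with hlt | hgt
  exacts [⟨.pos, x, hlt⟩, ⟨.neg, x, hgt⟩]

lemma wellFounded_regulates [Finite A] (h : IsEmpty (SCycle (ig f))) :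
    WellFounded (Regulates f) :=
  SCycle.wellFounded_of_isEmpty Regulates.exists_ig h

lemma apply_eq_of_regulators_eq [Finite A] {x y : A → Bool} (v : A)
    (hxy : ∀ u, Regulates f u v → x u = y u) : f v x = f v y :=
  dependsOn_setOf_isEssentialVar (f v) hxy

open Classical in
lemma exists_isFixedPoint [Finite A] (wf : WellFounded (Regulates f)) :
    ∃ x, IsFixedPoint f x := by
  let x : A → Bool :=
    wf.fix fun v rec => f v fun u => if h : Regulates f u v then rec u h else false
  refine ⟨x, funext fun v => ?_⟩
  -- the `false` branch is never consulted: `f v` ignores the variables that do not regulate `v`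
  rw [syncNext, show x v = _ from wf.fix_eq _ v]
  exact apply_eq_of_regulators_eq v fun u hu => by simp [hu, x]

lemma IsFixedPoint.not_asyncStep {x : A → Bool} (hx : IsFixedPoint f x) (y : A → Bool) :
    ¬ asyncStep f x y := by
  rintro ⟨v, hv, -⟩
  exact hv (congrFun hx v)

lemma reflTransGen_asyncStep_of_isFixedPoint [Fintype A] (wf : WellFounded (Regulates f))
    {x : A → Bool} (hx : IsFixedPoint f x) (y : A → Bool) :
    Relation.ReflTransGen (asyncStep f) y x := by
  induction hd : hammingDist y x using Nat.strong_induction_on generalizing y with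
  | _ d ih =>
    obtain rfl | hne := eq_or_ne y x
    · exact .refl
    obtain ⟨v, hv, hmin⟩ := wf.has_min {v | y v ≠ x v} (Function.ne_iff.1 hne)
    have hfv : f v y = x v := by
      rw [apply_eq_of_regulators_eq v fun u hu => not_not.1 fun h => hmin u h hu]
      exact congrFun hx v
    have hstep : asyncStep f y (Function.update y v (x v)) := ⟨v, hfv ▸ Ne.symm hv, hfv ▸ rfl⟩
    exact .head hstep (ih _ (hd ▸ hammingDist_update_lt hv) _ rfl)

lemma IsTrapSet.mem_of_reflTransGen {S : Set (A → Bool)} (hS : IsTrapSet f S) {y z : A → Bool}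
    (hyz : Relation.ReflTransGen (asyncStep f) y z) (hy : y ∈ S) : z ∈ S := by
  induction hyz with
  | refl => exact hy
  | tail _ hstep ih => exact hS.2 _ ih _ hstep

lemma IsFixedPoint.isTrapSet_singleton {x : A → Bool} (hx : IsFixedPoint f x) :
    IsTrapSet f {x} :=
  ⟨Set.singleton_nonempty x, fun _ hy z hz => absurd (hy ▸ hz) (hx.not_asyncStep z)⟩

lemma isAttractor_singleton_of_forall_mem {x : A → Bool} (hx : IsTrapSet f {x})
    (hmem : ∀ S, IsTrapSet f S → x ∈ S) :
    IsAttractor f {x} ∧ ∀ S, IsAttractor f S → S = {x} :=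
  ⟨⟨hx, fun T hT hTx => hTx.antisymm (Set.singleton_subset_iff.2 (hmem T hT))⟩,
    fun S hS => (hS.2 {x} hx (Set.singleton_subset_iff.2 (hmem S hS.1))).symm⟩

end Network

/-- if the influence graph has no cycle, then f has a unique fixed
point, and the asynchronous STG has a unique attractor, which is that fixed
point. -/
theorem stmt8 {A : Type*} [Fintype A] [DecidableEq A]
    (f : A → (A → Bool) → Bool) (h : IsEmpty (SCycle (ig f))) :
    ∃ x : A → Bool, IsFixedPoint f x ∧ (∀ y, IsFixedPoint f y → y = x) ∧
      IsAttractor f {x} ∧ ∀ S, IsAttractor f S → S = {x} := by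
  have wf := wellFounded_regulates h
  obtain ⟨x, hx⟩ := exists_isFixedPoint wf
  have hreach := reflTransGen_asyncStep_of_isFixedPoint wf hx
  refine ⟨x, hx, fun y hy => ?_, isAttractor_singleton_of_forall_mem hx.isTrapSet_singleton ?_⟩
  · exact (hreach y).cases_head.resolve_right fun ⟨z, hz, _⟩ => hy.not_asyncStep z hz
  · intro S hS
    obtain ⟨y, hy⟩ := hS.1
    exact hS.mem_of_reflTransGen (hreach y) hy
end

section
/- If the influence graph of a Boolean network f on finitely many variables has no negative cycle, then every attractor of the asynchronous state transition graph of f is a fixed point (there are no cyclic attractors). -/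
/-!
A closed walk of the influence graph with an odd number of negative arcs would be a negative
cycle, so the parity of the walks between two vertices of a strongly connected component is well
defined. Switching the network by this parity (conjugating its dynamics by `x ↦ σ ⊕ x`) makes
every arc inside a component positive: no negative arc lies on a cycle any more.

For such a network, the set `U` of vertices with no negative arc upstream is closed under
predecessors, so the network restricted to `U` is autonomous and monotone, and `U` contains an
unfrozen vertex as long as there is one. Inside an attractor the `U`-part reaches an equilibrium
(first raise, then lower the coordinates that want to move) and keeps it from then on, so the
attractor is also an attractor of the network with `U` frozen at that equilibrium. Induction on the
set of unfrozen vertices ends with a network whose attractor is a fixed point.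
-/

open Function

def Sign.parity : Sign → Bool
  | .pos => false
  | .neg => true

def Sign.ofParity : Bool → Sign
  | false => .pos
  | true => .neg

@[simp]
theorem Sign.parity_ofParity (b : Bool) : (Sign.ofParity b).parity = b := by
  cases b <;> rfl

theorem update_induction {A β : Type*} [Fintype A] [DecidableEq A] (y : A → β)
    {R : (A → β) → Prop} (hy : R y)
    (step : ∀ x u, x u ≠ y u → R (update x u (y u)) → R x) (x : A → β) : R x := by
  suffices ∀ D : Finset A, ∀ x, (∀ u ∉ D, x u = y u) → R x from
    this Finset.univ x (by simp)
  intro D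
  induction D using Finset.induction_on with
  | empty => intro x hx; rwa [funext fun u => hx u (Finset.notMem_empty u)]
  | insert a D _ ih =>
    intro x hx
    have hx' : R (update x a (y a)) := ih _ fun u hu => by
      by_cases hua : u = a
      · subst hua; simp
      · rw [update_of_ne hua]; exact hx u (by simp [hua, hu])
    by_cases hxa : x a = y a
    · rwa [← hxa, update_eq_self] at hx'
    · exact step x a hxa hx'

namespace SGraph

variable {A : Type*} (G : SGraph A)

def Adj (u v : A) : Prop := ∃ s, G u v s

abbrev Reach : A → A → Prop := Relation.ReflTransGen G.Adj

inductive ParityWalk : A → A → Bool → Prop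
  | nil (a : A) : ParityWalk a a false
  | cons {a b c : A} {s : Sign} {p : Bool} :
      G a b s → ParityWalk b c p → ParityWalk a c (s.parity ^^ p)

def NegArcsOffCycles : Prop := ∀ u v, G u v .neg → ¬ G.Reach v u

def NegAncestor (a v : A) : Prop := ∃ b, G a b .neg ∧ G.Reach b v

def NegFree (v : A) : Prop := ∀ a, ¬ G.NegAncestor a v

def sccSetoid : Setoid A where
  r u v := G.Reach u v ∧ G.Reach v u
  iseqv := ⟨fun _ => ⟨.refl, .refl⟩, fun h => ⟨h.2, h.1⟩,
    fun h₁ h₂ => ⟨h₁.1.trans h₂.1, h₂.2.trans h₁.2⟩⟩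

variable {G}

theorem ParityWalk.trans {a b c : A} {p q : Bool} (h₁ : G.ParityWalk a b p)
    (h₂ : G.ParityWalk b c q) : G.ParityWalk a c (p ^^ q) := by
  induction h₁ with
  | nil => simpa using h₂
  | cons harc _ ih => simpa [Bool.xor_assoc] using ParityWalk.cons harc (ih h₂)

theorem Reach.exists_parityWalk {a b : A} (h : G.Reach a b) : ∃ p, G.ParityWalk a b p := by
  induction h using Relation.ReflTransGen.head_induction_on with
  | refl => exact ⟨false, .nil _⟩
  | head hab _ ih =>
    obtain ⟨s, hs⟩ := hab
    obtain ⟨p, hp⟩ := ih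
    exact ⟨_, .cons hs hp⟩

theorem ParityWalk.exists_fin {a b : A} {p : Bool} (h : G.ParityWalk a b p) :
    ∃ (n : ℕ) (vtx : Fin (n + 1) → A) (sgn : Fin n → Sign),
      vtx 0 = a ∧ vtx (Fin.last n) = b ∧ (∀ i, G (vtx i.castSucc) (vtx i.succ) (sgn i)) ∧
      (Finset.univ.filter fun i => sgn i = .neg).card.bodd = p := by
  induction h with
  | nil a => exact ⟨0, fun _ => a, Fin.elim0, rfl, rfl, fun i => i.elim0, by simp⟩
  | @cons a b c s p hab _ ih =>
    obtain ⟨n, vtx, sgn, h0, hlast, harc, hpar⟩ := ih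
    refine ⟨n + 1, Fin.cons a vtx, Fin.cons s sgn, rfl, by simpa using hlast, fun i => ?_, ?_⟩
    · cases i using Fin.cases with
      | zero => simpa [h0] using hab
      | succ i => simpa using harc i
    · rw [← hpar, Finset.card_filter, Finset.card_filter, Fin.sum_univ_succ]
      cases s <;> simp [Nat.bodd_add, Sign.parity]

theorem ParityWalk.parity_eq (hodd : ∀ a, ¬ G.ParityWalk a a true) {u v : A} {p q : Bool}
    (hp : G.ParityWalk u v p) (hq : G.ParityWalk u v q) (hvu : G.Reach v u) : p = q := by
  obtain ⟨r, hr⟩ := hvu.exists_parityWalk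
  have hpr : (p ^^ r) = false := Bool.eq_false_iff.2 fun h => hodd u (h ▸ hp.trans hr)
  have hqr : (q ^^ r) = false := Bool.eq_false_iff.2 fun h => hodd u (h ▸ hq.trans hr)
  exact (bne_eq_false_iff_eq.1 hpr).trans (bne_eq_false_iff_eq.1 hqr).symm

variable (G) in
/-- Parity of a walk to `v` from the chosen representative of its strongly connected component. -/
noncomputable def gauge (v : A) : Bool :=
  (Quotient.mk_out (s := G.sccSetoid) v).1.exists_parityWalk.choose

theorem gauge_spec (v : A) : G.ParityWalk (Quotient.mk G.sccSetoid v).out v (G.gauge v) :=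
  (Quotient.mk_out (s := G.sccSetoid) v).1.exists_parityWalk.choose_spec

theorem parity_eq_gauge_xor (hodd : ∀ a, ¬ G.ParityWalk a a true) {u v : A} {s : Sign}
    (huv : G u v s) (hvu : G.Reach v u) : s.parity = (G.gauge u ^^ G.gauge v) := by
  have hsame : Quotient.mk G.sccSetoid u = Quotient.mk G.sccSetoid v :=
    Quotient.sound ⟨.single ⟨s, huv⟩, hvu⟩
  have hwalk : G.ParityWalk (Quotient.mk G.sccSetoid v).out v (G.gauge u ^^ s.parity) := by
    simpa [hsame] using (gauge_spec u).trans (.cons huv (.nil v))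
  rw [← hwalk.parity_eq hodd (gauge_spec v) (Quotient.mk_out (s := G.sccSetoid) v).2]
  simp

theorem NegArcsOffCycles.of_arcs {G' : SGraph A} (hG : G.NegArcsOffCycles)
    (h : ∀ u v s, G' u v s → (u = v ∧ s = .pos) ∨ G u v s) : G'.NegArcsOffCycles := by
  have hreach : ∀ u v, G'.Reach u v → G.Reach u v :=
    Relation.reflTransGen_closed fun a b ⟨s, hs⟩ =>
      (h a b s hs).elim (fun ⟨hab, _⟩ => hab ▸ .refl) fun hab => .single ⟨s, hab⟩
  intro u v huv hvu
  rcases h u v _ huv with ⟨-, hs⟩ | huv'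
  · cases hs
  · exact hG u v huv' (hreach _ _ hvu)

theorem NegFree.of_arc {u v : A} {s : Sign} (hv : G.NegFree v) (huv : G u v s) :
    G.NegFree u ∧ s = .pos := by
  refine ⟨fun a ⟨b, hab, hbu⟩ => hv a ⟨b, hab, hbu.tail ⟨s, huv⟩⟩, ?_⟩
  cases s
  · rfl
  · exact absurd ⟨v, huv, .refl⟩ (hv u)

theorem negFree_of_forall_arc {v : A} (hv : ∀ u s, G u v s → u = v ∧ s = .pos) :
    G.NegFree v := by
  have hreach : ∀ b, G.Reach b v → b = v := fun b hbv => by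
    induction hbv using Relation.ReflTransGen.head_induction_on with
    | refl => rfl
    | head hbc _ ih => obtain ⟨s, hs⟩ := hbc; subst ih; exact (hv _ s hs).1
  rintro a ⟨b, hab, hbv⟩
  cases hreach b hbv
  cases (hv a _ hab).2

theorem NegArcsOffCycles.exists_negFree [Finite A] (hG : G.NegArcsOffCycles) {v : A}
    (hv : ¬ G.NegFree v) : ∃ a, G.NegFree a ∧ G.NegAncestor a v := by
  have htrans : ∀ a b c, G.NegAncestor a b → G.NegAncestor b c → G.NegAncestor a c :=
    fun _ _ _ ⟨a', haa', ha'b⟩ ⟨_, hbb', hb'c⟩ =>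
      ⟨a', haa', (ha'b.tail ⟨_, hbb'⟩).trans hb'c⟩
  have : IsTrans A G.NegAncestor := ⟨htrans⟩
  have : Std.Irrefl G.NegAncestor := ⟨fun a ⟨b, hab, hba⟩ => hG a b hab hba⟩
  obtain ⟨a, ha, hmin⟩ := (Finite.wellFounded_of_trans_of_irrefl G.NegAncestor).has_min
    {a | G.NegAncestor a v} (not_forall_not.1 hv)
  exact ⟨a, fun b hba => hmin b (htrans _ _ _ hba ha) hba, ha⟩

end SGraph

theorem NoNegCycle.not_parityWalk {A : Type*} {G : SGraph A} (h : NoNegCycle G) (a : A) :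
    ¬ G.ParityWalk a a true := by
  intro hw
  obtain ⟨n, vtx, sgn, h0, hlast, harc, hpar⟩ := hw.exists_fin
  cases n with
  | zero => simp at hpar
  | succ m =>
    refine h ⟨m, fun i => vtx i.castSucc, sgn, fun i => ?_⟩ ?_
    · cases i using Fin.lastCases with
      | last => simpa [h0, hlast] using harc (Fin.last m)
      | cast i => simpa [Fin.coeSucc_eq_succ] using harc i.castSucc
    · simp [SCycle.IsNeg, Nat.mod_two_of_bodd, hpar]

section Influence

variable {A : Type*} [DecidableEq A] {g : A → (A → Bool) → Bool} {u v : A} {s : Sign}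

theorem ig_iff : ig g u v s ↔ ∃ x, ∀ b, g v (update x u b) = (s.parity ^^ b) := by
  cases s <;> simp [ig, Sign.parity, Bool.lt_iff, Bool.forall_bool, and_comm]

theorem ig_of_frozen (hv : ∀ x, g v x = x v) (h : ig g u v s) : u = v ∧ s = .pos := by
  obtain ⟨x, hx⟩ := ig_iff.1 h
  simp only [hv] at hx
  by_cases huv : u = v
  · subst huv
    have := hx false
    cases s <;> simp_all [Sign.parity]
  · have h₀ := hx false
    have h₁ := hx true
    simp [update_of_ne (Ne.symm huv)] at h₀ h₁
    simp [h₀] at h₁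

theorem apply_update_eq_of_not_adj (h : ¬ (ig g).Adj u v) (x : A → Bool) (b : Bool) :
    g v (update x u b) = g v x := by
  have hconst : ∀ c c', g v (update x u c) = g v (update x u c') := by
    have : g v (update x u false) = g v (update x u true) := by
      by_contra hne
      rcases lt_or_gt_of_ne hne with hlt | hlt
      exacts [h ⟨.pos, x, hlt⟩, h ⟨.neg, x, hlt⟩]
    simp [Bool.forall_bool, this]
  rw [hconst b (x u), update_eq_self]

variable [Fintype A]

theorem apply_eq_of_forall_adj {x y : A → Bool} (h : ∀ u, (ig g).Adj u v → x u = y u) :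
    g v x = g v y := by
  refine update_induction y (R := fun x => (∀ u, (ig g).Adj u v → x u = y u) → g v x = g v y)
    (fun _ => rfl) (fun x u hne ih hxy => ?_) x h
  have hu : ¬ (ig g).Adj u v := fun hu => hne (hxy u hu)
  rw [← apply_update_eq_of_not_adj hu x (y u)]
  refine ih fun w hw => ?_
  by_cases hwu : w = u
  · subst hwu; simp
  · rw [update_of_ne hwu]; exact hxy w hw

theorem monotone_of_forall_not_neg (h : ∀ u, ¬ ig g u v .neg) : Monotone (g v) := by
  intro x y hxy
  refine update_induction y (R := fun x => x ≤ y → g v x ≤ g v y) (fun _ => le_rfl)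
    (fun x u hne ih hle => ?_) x hxy
  have hxu : x u = false ∧ y u = true := by
    have := hle u
    cases hx : x u <;> cases hy : y u <;> simp_all [Bool.le_iff_imp]
  calc g v x = g v (update x u false) := by rw [← hxu.1, update_eq_self]
    _ ≤ g v (update x u true) := not_lt.1 fun hlt => h u ⟨x, hlt⟩
    _ ≤ g v y := by rw [← hxu.2]; exact ih (update_le_iff.2 ⟨le_rfl, fun j _ => hle j⟩)

end Influence

section Dynamics

variable {A : Type*} [DecidableEq A] {g h : A → (A → Bool) → Bool} {S : Set (A → Bool)}

theorem IsAttractor.congr (hS : IsAttractor g S) (hgh : ∀ x ∈ S, ∀ v, h v x = g v x) :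
    IsAttractor h S := by
  have hstep : ∀ x ∈ S, ∀ y, asyncStep h x y ↔ asyncStep g x y := fun x hx y => by
    simp only [asyncStep, hgh x hx]
  refine ⟨⟨hS.1.1, fun x hx y hxy => hS.1.2 x hx y ((hstep x hx y).1 hxy)⟩,
    fun T hT hTS => ?_⟩
  exact hS.2 T ⟨hT.1, fun x hx y hxy => hT.2 x hx y ((hstep x (hTS hx) y).2 hxy)⟩ hTS

theorem isTrapSet_preimage_iff (e : (A → Bool) ≃ (A → Bool))
    (he : ∀ x y, asyncStep h x y ↔ asyncStep g (e x) (e y)) :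
    IsTrapSet h (e ⁻¹' S) ↔ IsTrapSet g S := by
  refine and_congr e.surjective.nonempty_preimage
    ⟨fun hS x hx y hxy => ?_, fun hS x hx y hxy => ?_⟩
  · simpa using hS (e.symm x) (by simpa using hx) (e.symm y) ((he _ _).2 (by simpa using hxy))
  · exact hS _ hx _ ((he x y).1 hxy)

theorem IsAttractor.preimage (hS : IsAttractor g S) (e : (A → Bool) ≃ (A → Bool))
    (he : ∀ x y, asyncStep h x y ↔ asyncStep g (e x) (e y)) : IsAttractor h (e ⁻¹' S) := by
  refine ⟨(isTrapSet_preimage_iff e he).2 hS.1, fun T hT hTS => ?_⟩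
  rw [← e.preimage_symm_preimage T, isTrapSet_preimage_iff e he] at hT
  rw [← e.preimage_symm_preimage T, hS.2 _ hT fun x hx => by simpa using hTS hx]

theorem IsAttractor.eq_singleton (hS : IsAttractor g S) {x : A → Bool} (hxS : x ∈ S)
    (hx : IsFixedPoint g x) : S = {x} := by
  refine (hS.2 {x} ⟨Set.singleton_nonempty x, ?_⟩ (Set.singleton_subset_iff.2 hxS)).symm
  rintro _ rfl y ⟨v, hv, -⟩
  exact absurd (congrFun hx v) hv

theorem IsAttractor.forall_eqOn (hS : IsAttractor g S) {U : Finset A}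
    (hU : ∀ v ∈ U, ∀ x y, (∀ u ∈ U, x u = y u) → g v x = g v y) {z : A → Bool}
    (hzS : z ∈ S) (hz : ∀ v ∈ U, g v z = z v) : ∀ x ∈ S, ∀ v ∈ U, x v = z v := by
  have hT : IsTrapSet g {x ∈ S | ∀ v ∈ U, x v = z v} := by
    refine ⟨⟨z, hzS, fun _ _ => rfl⟩, ?_⟩
    rintro x ⟨hxS, hxz⟩ y ⟨w, hw, rfl⟩
    have hwU : w ∉ U := fun hwU => hw (by rw [hU w hwU x z hxz, hz w hwU, hxz w hwU])
    refine ⟨hS.1.2 x hxS _ ⟨w, hw, rfl⟩, fun v hv => ?_⟩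
    rw [update_of_ne (ne_of_mem_of_not_mem hv hwU)]
    exact hxz v hv
  intro x hx
  rw [← hS.2 _ hT fun x hx => hx.1] at hx
  exact hx.2

theorem card_filter_update_lt (U : Finset A) {y : A → Bool} {v : A} {c : Bool} (hv : v ∈ U)
    (hyv : y v = c) :
    (U.filter fun u => update y v (!c) u = c).card < (U.filter fun u => y u = c).card := by
  refine Finset.card_lt_card ((Finset.ssubset_iff_of_subset fun u => ?_).2 ⟨v, ?_, ?_⟩)
  · simp only [Finset.mem_filter]
    rintro ⟨hu, huc⟩
    by_cases huv : u = v
    · subst huv; simp at huc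
    · rw [update_of_ne huv] at huc; exact ⟨hu, huc⟩
  · simp [hv, hyv]
  · simp

variable [Fintype A]

/-- Among the states of `S` satisfying `P`, one minimising the number of coordinates of `U` equal
to `c` admits no step moving such a coordinate away from `c`. -/
theorem IsTrapSet.exists_mem_blocked (hS : IsTrapSet g S) (U : Finset A) (c : Bool)
    {P : (A → Bool) → Prop} (hP : ∃ y ∈ S, P y)
    (hstep : ∀ y v, P y → v ∈ U → y v = c → g v y = !c → P (update y v !c)) :
    ∃ y ∈ S, P y ∧ ∀ v ∈ U, y v = c → g v y = c := by
  obtain ⟨y, ⟨hyS, hyP⟩, hmin⟩ := Set.exists_min_image {y | y ∈ S ∧ P y}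
    (fun y => (U.filter fun u => y u = c).card) (Set.toFinite _) hP
  refine ⟨y, hyS, hyP, fun v hv hyv => ?_⟩
  by_contra hne
  have hgv : g v y = !c := by cases c <;> simpa using hne
  have hy' : asyncStep g y (update y v !c) := ⟨v, by simp [hgv, hyv], by rw [hgv]⟩
  exact (hmin _ ⟨hS.2 y hyS _ hy', hstep y v hyP hv hyv hgv⟩).not_gt
    (card_filter_update_lt U hv hyv)

theorem IsTrapSet.exists_mem_eqOn (hS : IsTrapSet g S) (U : Finset A)
    (hmono : ∀ v ∈ U, Monotone (g v)) : ∃ z ∈ S, ∀ v ∈ U, g v z = z v := by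
  obtain ⟨y, hyS, -, hy⟩ := hS.exists_mem_blocked U false (P := fun _ => True)
    (hS.1.imp fun _ h => ⟨h, trivial⟩) fun _ _ _ _ _ _ => trivial
  have hstep : ∀ y v, (∀ w ∈ U, y w = false → g w y = false) → v ∈ U → y v = true →
      g v y = false →
      ∀ w ∈ U, update y v false w = false → g w (update y v false) = false := by
    intro y v hy _ _ hgv w hw hw'
    have hgw : g w y = false := by
      by_cases hwv : w = v
      · exact hwv ▸ hgv
      · rw [update_of_ne hwv] at hw'; exact hy w hw hw'
    have hle : update y v false ≤ y := update_le_iff.2 ⟨Bool.false_le _, fun _ _ => le_rfl⟩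
    simpa [hgw, Bool.le_iff_imp] using hmono w hw hle
  obtain ⟨z, hzS, hzle, hz⟩ := hS.exists_mem_blocked U true ⟨y, hyS, hy⟩ hstep
  exact ⟨z, hzS, fun v hv => by cases hzv : z v; exacts [hzle v hv hzv, hz v hv hzv]⟩

end Dynamics

section Freeze

variable {A : Type*} [DecidableEq A] {g : A → (A → Bool) → Bool} {U : Finset A}
  {z : A → Bool} {u v : A} {s : Sign}

def freeze (g : A → (A → Bool) → Bool) (U : Finset A) (z : A → Bool) :
    A → (A → Bool) → Bool :=
  fun v x => if v ∈ U then x v else g v (U.piecewise z x)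

theorem freeze_of_mem (hv : v ∈ U) (x : A → Bool) : freeze g U z v x = x v := if_pos hv

theorem ig_freeze_of_notMem (h : ig (freeze g U z) u v s) (hv : v ∉ U) :
    u ∉ U ∧ ig g u v s := by
  obtain ⟨x, hx⟩ := ig_iff.1 h
  simp only [freeze, if_neg hv] at hx
  by_cases hu : u ∈ U
  · have hpw : ∀ b, U.piecewise z (update x u b) = U.piecewise z x := fun b =>
      U.piecewise_congr (fun _ _ => rfl) fun w hw =>
        update_of_ne (fun h : w = u => hw (h ▸ hu)) _ _
    have h₀ := hx false
    rw [hpw, ← hpw true, hx true] at h₀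
    simp at h₀
  · simp only [← U.update_piecewise_of_notMem z x hu] at hx
    exact ⟨hu, ig_iff.2 ⟨_, hx⟩⟩

theorem ig_freeze (h : ig (freeze g U z) u v s) : (u = v ∧ s = .pos) ∨ ig g u v s := by
  by_cases hv : v ∈ U
  · exact .inl (ig_of_frozen (freeze_of_mem hv) h)
  · exact .inr (ig_freeze_of_notMem h hv).2

variable [Fintype A] {S : Set (A → Bool)}

theorem IsAttractor.exists_freeze_eq (hS : IsAttractor g S)
    (hU : ∀ u v s, ig g u v s → v ∈ U → u ∈ U ∧ s = .pos) :
    ∃ z, ∀ x ∈ S, ∀ v, freeze g U z v x = g v x := by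
  have hauto : ∀ v ∈ U, ∀ x y, (∀ u ∈ U, x u = y u) → g v x = g v y :=
    fun v hv _ _ hxy => apply_eq_of_forall_adj fun u ⟨s, hs⟩ => hxy u (hU u v s hs hv).1
  have hmono : ∀ v ∈ U, Monotone (g v) :=
    fun v hv => monotone_of_forall_not_neg fun u hu => nomatch (hU u v _ hu hv).2
  obtain ⟨z, hzS, hz⟩ := hS.1.exists_mem_eqOn U hmono
  refine ⟨z, fun x hx v => ?_⟩
  have hxz := hS.forall_eqOn hauto hzS hz x hx
  by_cases hv : v ∈ U
  · rw [freeze_of_mem hv, hauto v hv x z hxz, hz v hv, hxz v hv]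
  · have hpw : U.piecewise z x = x := funext fun u => by
      by_cases hu : u ∈ U <;> simp [hu, hxz]
    simp [freeze, hv, hpw]

end Freeze

section Switching

variable {A : Type*} [DecidableEq A] {f : A → (A → Bool) → Bool} {σ : A → Bool}

def switchState (σ x : A → Bool) : A → Bool := fun u => σ u ^^ x u

def switchNetwork (σ : A → Bool) (f : A → (A → Bool) → Bool) :
    A → (A → Bool) → Bool :=
  fun v x => σ v ^^ f v (switchState σ x)

omit [DecidableEq A] in
theorem switchState_involutive (σ : A → Bool) : Involutive (switchState σ) :=
  fun x => funext fun u => by simp [switchState]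

theorem switchState_update (x : A → Bool) (u : A) (b : Bool) :
    switchState σ (update x u b) = update (switchState σ x) u (σ u ^^ b) :=
  funext (apply_update (fun w c => σ w ^^ c) x u b)

theorem asyncStep_switchNetwork_iff {x y : A → Bool} :
    asyncStep (switchNetwork σ f) x y ↔ asyncStep f (switchState σ x) (switchState σ y) := by
  refine exists_congr fun v => and_congr ?_ ?_
  · cases hσ : σ v <;> simp [switchNetwork, switchState, hσ]
  · rw [← (switchState_involutive σ).injective.eq_iff, switchState_update]
    simp [switchNetwork]

theorem IsAttractor.preimage_switchState {S : Set (A → Bool)} (hS : IsAttractor f S)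
    (σ : A → Bool) : IsAttractor (switchNetwork σ f) (switchState σ ⁻¹' S) :=
  hS.preimage ((switchState_involutive σ).toPerm _) fun _ _ => asyncStep_switchNetwork_iff

omit [DecidableEq A] in
theorem isFixedPoint_switchNetwork_iff {x : A → Bool} :
    IsFixedPoint (switchNetwork σ f) x ↔ IsFixedPoint f (switchState σ x) := by
  simp only [IsFixedPoint, syncNext, funext_iff, switchNetwork]
  refine forall_congr' fun v => ?_
  cases hσ : σ v <;> simp [switchState, hσ]

theorem ig_switchNetwork {u v : A} {s : Sign} (h : ig (switchNetwork σ f) u v s) :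
    ig f u v (Sign.ofParity (s.parity ^^ σ u ^^ σ v)) := by
  obtain ⟨x, hx⟩ := ig_iff.1 h
  refine ig_iff.2 ⟨switchState σ x, fun b => ?_⟩
  have := hx (σ u ^^ b)
  simp only [switchNetwork, switchState_update, Bool.bne_self_left] at this
  have key : f v (update (switchState σ x) u b) = (σ v ^^ (s.parity ^^ (σ u ^^ b))) := by
    rw [← this]; simp
  rw [key, Sign.parity_ofParity, Bool.xor_assoc, Bool.xor_assoc, Bool.xor_left_comm (σ v),
    Bool.xor_left_comm (σ v)]

theorem NoNegCycle.negArcsOffCycles_switchNetwork (h : NoNegCycle (ig f)) :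
    (ig (switchNetwork (ig f).gauge f)).NegArcsOffCycles := by
  intro u v huv hvu
  have hadj : ∀ a b, (ig (switchNetwork (ig f).gauge f)).Adj a b → (ig f).Adj a b :=
    fun _ _ ⟨_, hs⟩ => ⟨_, ig_switchNetwork hs⟩
  have hparity := SGraph.parity_eq_gauge_xor h.not_parityWalk (ig_switchNetwork huv)
    (Relation.ReflTransGen.mono hadj _ _ hvu)
  rw [Sign.parity_ofParity] at hparity
  simp [Sign.parity] at hparity

end Switching

section FrozenOutside

variable {A : Type*} [Fintype A] [DecidableEq A] {g : A → (A → Bool) → Bool}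

theorem exists_mem_negFree {W : Finset A} (hW₀ : W.Nonempty)
    (hfrozen : ∀ v ∉ W, ∀ x, g v x = x v) (hW : ∀ u v s, ig g u v s → v ∈ W → u ∈ W)
    (hneg : (ig g).NegArcsOffCycles) : ∃ w ∈ W, (ig g).NegFree w := by
  obtain ⟨w, hw⟩ := hW₀
  by_cases hwfree : (ig g).NegFree w
  · exact ⟨w, hw, hwfree⟩
  obtain ⟨a, ha, b, hab, -⟩ := hneg.exists_negFree hwfree
  have hb : b ∈ W := by_contra fun hb => nomatch (ig_of_frozen (hfrozen b hb) hab).2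
  exact ⟨a, hW a b _ hab hb, ha⟩

theorem exists_isFixedPoint_mem_of_frozen_outside (W : Finset A) (g : A → (A → Bool) → Bool)
    (hfrozen : ∀ v ∉ W, ∀ x, g v x = x v) (hW : ∀ u v s, ig g u v s → v ∈ W → u ∈ W)
    (hneg : (ig g).NegArcsOffCycles) (S : Set (A → Bool)) (hS : IsAttractor g S) :
    ∃ x ∈ S, IsFixedPoint g x := by
  induction W using Finset.strongInduction generalizing g with
  | H W ih =>
  classical
  rcases W.eq_empty_or_nonempty with rfl | hW₀
  · obtain ⟨x, hx⟩ := hS.1.1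
    exact ⟨x, hx, funext fun v => hfrozen v (Finset.notMem_empty v) x⟩
  set U := Finset.univ.filter (ig g).NegFree
  have hU : ∀ u v s, ig g u v s → v ∈ U → u ∈ U ∧ s = .pos := fun u v s h hv => by
    simpa [U] using (Finset.mem_filter.1 hv).2.of_arc h
  have hUW : ∀ v ∉ W.filter (· ∉ U), v ∈ U := fun v hv => by
    by_cases hvW : v ∈ W
    · simpa [hvW] using hv
    · simpa [U] using SGraph.negFree_of_forall_arc fun u s h => ig_of_frozen (hfrozen v hvW) h
  obtain ⟨w, hwW, hwU⟩ := exists_mem_negFree hW₀ hfrozen hW hneg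
  obtain ⟨z, hz⟩ := hS.exists_freeze_eq hU
  obtain ⟨x, hxS, hx⟩ := ih (W.filter (· ∉ U))
    (Finset.filter_ssubset.2 ⟨w, hwW, by simpa [U] using hwU⟩) (freeze g U z)
    (fun v hv => freeze_of_mem (hUW v hv))
    (fun u v s h hv => by
      obtain ⟨hvW, hvU⟩ := Finset.mem_filter.1 hv
      obtain ⟨huU, huv⟩ := ig_freeze_of_notMem h hvU
      exact Finset.mem_filter.2 ⟨hW u v s huv hvW, huU⟩)
    (hneg.of_arcs fun _ _ _ => ig_freeze) (hS.congr hz)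
  exact ⟨x, hxS, funext fun v => (hz x hxS v).symm.trans (congrFun hx v)⟩

theorem SGraph.NegArcsOffCycles.exists_isFixedPoint_mem (hneg : (ig g).NegArcsOffCycles)
    {S : Set (A → Bool)} (hS : IsAttractor g S) : ∃ x ∈ S, IsFixedPoint g x :=
  exists_isFixedPoint_mem_of_frozen_outside Finset.univ g (by simp) (by simp) hneg S hS

end FrozenOutside

/-- if the influence graph has no negative cycle, every attractor
of the asynchronous STG is a fixed point. -/
theorem stmt9 {A : Type*} [Fintype A] [DecidableEq A]
    (f : A → (A → Bool) → Bool) (h : NoNegCycle (ig f)) :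
    ∀ S, IsAttractor f S → ∃ x, S = {x} ∧ IsFixedPoint f x := by
  intro S hS
  obtain ⟨x, hxS, hx⟩ :=
    h.negArcsOffCycles_switchNetwork.exists_isFixedPoint_mem (hS.preimage_switchState _)
  have hfix := isFixedPoint_switchNetwork_iff.1 hx
  exact ⟨_, hS.eq_singleton hxS hfix, hfix⟩
end

section
/- If the influence graph of a Boolean network f on finitely many variables has no positive cycle, then the asynchronous state transition graph of f has a unique attractor; consequently f has a unique subset-minimal trap space. -/
namespace BNAux
open Classical
variable {A : Type*} [Fintype A] [DecidableEq A]

def patch (x y : A → Bool) : List A → (A → Bool)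
  | [] => y
  | u :: L => Function.update (patch x y L) u (x u)

lemma patch_apply (x y : A → Bool) (L : List A) (a : A) :
    patch x y L a = if a ∈ L then x a else y a := by
  induction L with
  | nil => simp [patch]
  | cons u L ih =>
    by_cases h : a = u
    · subst h; simp [patch]
    · simp [patch, Function.update_of_ne h, ih, h]

lemma bool_eq_of_ne_of_ne : ∀ {a b c : Bool}, a ≠ c → b ≠ c → a = b := by decide

lemma arc_of_change (f : A → (A → Bool) → Bool) (x y : A → Bool) (v : A) :
    ∀ L : List A, f v (patch x y L) ≠ f v y →
      ∃ u s, x u ≠ y u ∧ ig f u v s ∧ (s = Sign.pos ↔ x u = f v (patch x y L)) := by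
  intro L
  induction L with
  | nil => intro hL; exact absurd rfl hL
  | cons u L ih =>
    intro hL
    by_cases h1 : f v (patch x y L) = f v y
    · -- the change happens at this step
      set z := patch x y L with hz
      have hne : f v (Function.update z u (x u)) ≠ f v z := by
        intro he; exact hL (by simpa [patch, ← hz, he] using h1)
      have hzu : z u ≠ x u := by
        intro he
        rw [← he, Function.update_eq_self] at hne
        exact hne rfl
      have hxyu : x u ≠ y u := by
        have := patch_apply x y L u
        rw [← hz] at this
        by_cases hm : u ∈ L
        · simp [hm] at this; exact absurd this hzu
        · simp [hm] at this; intro he; exact hzu (this.trans he.symm)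
      -- z u = ! x u
      have hzxu : z u = ! x u := by
        cases hxu : x u <;> cases hzu2 : z u <;> simp_all
      have hb : f v (patch x y (u :: L)) = f v (Function.update z u (x u)) := by
        simp [patch, ← hz]
      set b := f v (Function.update z u (x u)) with hbd
      have hzb : f v (Function.update z u (! x u)) = ! b := by
        rw [← hzxu, Function.update_eq_self]
        cases hb2 : b <;> cases hfz : f v z <;> simp_all
      cases hxu : x u
      · -- x u = false : update u false gives b, update u true gives !b
        have e0 : f v (Function.update z u false) = b := by rw [← hxu]
        have e1 : f v (Function.update z u true) = ! b := by
          have := hzb; rw [hxu] at this; simpa using this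
        cases hb2 : b
        · exact ⟨u, Sign.pos, hxyu, ⟨z, by simp [e0, e1, hb2, Bool.lt_iff]⟩,
            by simp [hb, ← hbd, hb2, hxu]⟩
        · exact ⟨u, Sign.neg, hxyu, ⟨z, by simp [e0, e1, hb2, Bool.lt_iff]⟩,
            by simp [hb, ← hbd, hb2, hxu]⟩
      · have e1 : f v (Function.update z u true) = b := by rw [← hxu]
        have e0 : f v (Function.update z u false) = ! b := by
          have := hzb; rw [hxu] at this; simpa using this
        cases hb2 : b
        · exact ⟨u, Sign.neg, hxyu, ⟨z, by simp [e0, e1, hb2, Bool.lt_iff]⟩,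
            by simp [hb, ← hbd, hb2, hxu]⟩
        · exact ⟨u, Sign.pos, hxyu, ⟨z, by simp [e0, e1, hb2, Bool.lt_iff]⟩,
            by simp [hb, ← hbd, hb2, hxu]⟩
    · obtain ⟨u', s, h1', h2, h3⟩ := ih h1
      refine ⟨u', s, h1', h2, ?_⟩
      rw [bool_eq_of_ne_of_ne h1 hL] at h3
      exact h3

lemma exists_in_arc (f : A → (A → Bool) → Bool) (x y : A → Bool) (v : A)
    (hv : f v x ≠ f v y) :
    ∃ u s, x u ≠ y u ∧ ig f u v s ∧ (s = Sign.pos ↔ x u = f v x) := by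
  have hL : patch x y (Finset.univ.toList (α := A)) = x := by
    funext a; rw [patch_apply]; simp
  have := arc_of_change f x y v (Finset.univ.toList) (by rw [hL]; exact hv)
  rw [hL] at this
  exact this
lemma parity_lemma {n : ℕ} (χ : Fin (n + 1) → Bool) :
    (Finset.univ.filter fun t => χ t ≠ χ (t + 1)).card % 2 = 0 := by
  have hcast : ((Finset.univ.filter fun t => χ t ≠ χ (t + 1)).card : ZMod 2) = 0 := by
    rw [Finset.card_filter, Nat.cast_sum]
    have hterm : ∀ t : Fin (n + 1),
        ((if χ t ≠ χ (t + 1) then 1 else 0 : ℕ) : ZMod 2)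
          = (if χ t then 1 else 0) + (if χ (t + 1) then 1 else 0) := by
      intro t; cases h1 : χ t <;> cases h2 : χ (t + 1) <;> simp [h1, h2] <;> decide
    rw [Finset.sum_congr rfl (fun t _ => hterm t), Finset.sum_add_distrib]
    have hshift : (∑ t : Fin (n + 1), (if χ (t + 1) then (1 : ZMod 2) else 0))
        = ∑ t : Fin (n + 1), (if χ t then (1 : ZMod 2) else 0) :=
      Fintype.sum_bijective (· + (1 : Fin (n + 1)))
        (Equiv.addRight (1 : Fin (n + 1))).bijective _ _ (fun t => rfl)
    rw [hshift, ← two_mul]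
    have h2 : (2 : ZMod 2) = 0 := by decide
    rw [h2, zero_mul]
  have := (ZMod.natCast_eq_zero_iff _ 2).1 hcast
  omega

lemma posCycle_of_two (f : A → (A → Bool) → Bool) (x y : A → Bool) (hxy : x ≠ y)
    (hx : ∀ v, x v ≠ y v → f v x = x v) (hy : ∀ v, x v ≠ y v → f v y = y v) :
    ∃ c : SCycle (ig f), c.IsPos := by
  have key : ∀ v : A, ∃ u s, x v ≠ y v →
      (x u ≠ y u ∧ ig f u v s ∧ (s = Sign.pos ↔ x u = x v)) := by
    intro v
    by_cases hv : x v ≠ y v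
    · have hfv : f v x ≠ f v y := by rw [hx v hv, hy v hv]; exact hv
      obtain ⟨u, s, h1, h2, h3⟩ := exists_in_arc f x y v hfv
      rw [hx v hv] at h3
      exact ⟨u, s, fun _ => ⟨h1, h2, h3⟩⟩
    · exact ⟨v, Sign.pos, fun h => absurd h hv⟩
  choose g σ hspec using key
  obtain ⟨v₀, hv₀⟩ : ∃ v, x v ≠ y v := by
    by_contra hc; push_neg at hc; exact hxy (funext fun a => hc a)
  have hinv : ∀ k, x (g^[k] v₀) ≠ y (g^[k] v₀) := by
    intro k; induction k with
    | zero => exact hv₀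
    | succ k ih =>
      rw [Function.iterate_succ_apply']
      exact ((hspec _) ih).1
  -- pigeonhole
  obtain ⟨i, j, hij, hije⟩ := Fintype.exists_ne_map_eq_of_card_lt
    (fun i : Fin (Fintype.card A + 1) => g^[i.val] v₀) (by simp)
  wlog hlt : i.val < j.val generalizing i j
  · have hne : (i : ℕ) ≠ (j : ℕ) := fun he => hij (Fin.ext he)
    exact this j i hij.symm hije.symm (by omega)
  obtain ⟨n, hn⟩ : ∃ n, j.val - i.val = n + 1 := ⟨j.val - i.val - 1, by omega⟩
  have hpb : g^[n + 1] (g^[i.val] v₀) = g^[i.val] v₀ := by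
    rw [← Function.iterate_add_apply, (by omega : n + 1 + i.val = j.val)]
    exact hije.symm
  have hinvb : ∀ k, x (g^[k] (g^[i.val] v₀)) ≠ y (g^[k] (g^[i.val] v₀)) := by
    intro k
    rw [← Function.iterate_add_apply]
    exact hinv _
  set b := g^[i.val] v₀ with hbdef
  -- build the cycle
  set vtx : Fin (n + 1) → A := fun t => g^[n + 1 - t.val] b with hvtx
  have hD : ∀ t, x (vtx t) ≠ y (vtx t) := fun t => hinvb _
  have hstep : ∀ t : Fin (n + 1), vtx t = g (vtx (t + 1)) := by
    intro t
    have hval : ((t + 1 : Fin (n + 1)) : ℕ) = (t.val + 1) % (n + 1) := by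
      simp [Fin.add_def]
    simp only [hvtx]
    by_cases ht : t.val = n
    · have h0 : ((t + 1 : Fin (n + 1)) : ℕ) = 0 := by rw [hval, ht]; simp
      rw [h0, ht, Nat.sub_zero, hpb, Nat.add_sub_cancel_left, Function.iterate_one]
    · have htn : t.val < n := lt_of_le_of_ne (Nat.lt_succ_iff.1 t.isLt) ht
      have h0 : ((t + 1 : Fin (n + 1)) : ℕ) = t.val + 1 := by
        rw [hval]; exact Nat.mod_eq_of_lt (by omega)
      have e1 : n + 1 - (t.val + 1) = n - t.val := by omega
      have e2 : n + 1 - t.val = (n - t.val) + 1 := by omega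
      rw [h0, e1, e2, Function.iterate_succ_apply']
  refine ⟨⟨n, vtx, fun t => σ (vtx (t + 1)), ?_⟩, ?_⟩
  · intro t
    have := (hspec (vtx (t + 1)) (hD (t + 1))).2.1
    rw [← hstep t] at this
    exact this
  · show (Finset.univ.filter fun t => σ (vtx (t + 1)) = Sign.neg).card % 2 = 0
    have hsgn : ∀ t : Fin (n + 1), (σ (vtx (t + 1)) = Sign.neg) ↔ (x (vtx t) ≠ x (vtx (t + 1))) := by
      intro t
      have h3 := (hspec (vtx (t + 1)) (hD (t + 1))).2.2
      rw [← hstep t] at h3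
      constructor
      · intro hne hx'; have := h3.2 hx'; rw [this] at hne; exact Sign.noConfusion hne
      · intro hne
        cases hs : σ (vtx (t + 1))
        · exact absurd (h3.1 hs) hne
        · rfl
    have : (Finset.univ.filter fun t => σ (vtx (t + 1)) = Sign.neg)
        = (Finset.univ.filter fun t => (fun t => x (vtx t)) t ≠ (fun t => x (vtx t)) (t + 1)) := by
      apply Finset.filter_congr; intro t _; simp only [eq_iff_iff]; exact (hsgn t)
    rw [this]
    exact parity_lemma _
def asyncStepOn (W : Finset A) (f : A → (A → Bool) → Bool) (x y : A → Bool) : Prop :=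
  ∃ v ∈ W, f v x ≠ x v ∧ y = Function.update x v (f v x)

def TrapOn (W : Finset A) (f : A → (A → Bool) → Bool) (S : Set (A → Bool)) : Prop :=
  S.Nonempty ∧ ∀ x ∈ S, ∀ y, asyncStepOn W f x y → y ∈ S

lemma trapOn_restrict {W : Finset A} {f : A → (A → Bool) → Bool} {T : Set (A → Bool)}
    (hT : TrapOn W f T) (v : A) (b : Bool) (z : A → Bool) (hz : z ∈ T) (hzv : z v = b) :
    TrapOn (W.erase v) f {x | x ∈ T ∧ x v = b} := by
  refine ⟨⟨z, hz, hzv⟩, ?_⟩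
  rintro x ⟨hxT, hxv⟩ y ⟨u, huW, hne, rfl⟩
  have huv : u ≠ v := Finset.ne_of_mem_erase huW
  refine ⟨hT.2 x hxT _ ⟨u, Finset.mem_of_mem_erase huW, hne, rfl⟩, ?_⟩
  rw [Function.update_of_ne (Ne.symm huv)]
  exact hxv

lemma trapOn_inter (f : A → (A → Bool) → Bool) (h : NoPosCycle (ig f)) :
    ∀ W : Finset A, ∀ T1 T2 : Set (A → Bool), TrapOn W f T1 → TrapOn W f T2 →
      (∀ x ∈ T1, ∀ y ∈ T2, ∀ a, a ∉ W → x a = y a) → (T1 ∩ T2).Nonempty := by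
  intro W
  induction W using Finset.strongInduction with
  | _ W ih =>
    intro T1 T2 hT1 hT2 hagree
    obtain ⟨x1, hx1⟩ := hT1.1
    obtain ⟨y1, hy1⟩ := hT2.1
    by_cases hc : ∃ v ∈ W, ∃ b, (∃ x ∈ T1, x v = b) ∧ (∃ y ∈ T2, y v = b)
    · obtain ⟨v, hvW, b, ⟨x2, hx2, hx2v⟩, ⟨y2, hy2, hy2v⟩⟩ := hc
      have hsub : W.erase v ⊂ W := Finset.erase_ssubset hvW
      have h1' := trapOn_restrict hT1 v b x2 hx2 hx2v
      have h2' := trapOn_restrict hT2 v b y2 hy2 hy2v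
      have hagree' : ∀ x ∈ {x | x ∈ T1 ∧ x v = b}, ∀ y ∈ {x | x ∈ T2 ∧ x v = b},
          ∀ a, a ∉ W.erase v → x a = y a := by
        rintro x ⟨hxT, hxv⟩ y ⟨hyT, hyv⟩ a ha
        by_cases hav : a = v
        · subst hav; rw [hxv, hyv]
        · exact hagree x hxT y hyT a (fun haW => ha (Finset.mem_erase.2 ⟨hav, haW⟩))
      obtain ⟨z, ⟨hz1, _⟩, ⟨hz2, _⟩⟩ := ih (W.erase v) hsub _ _ h1' h2' hagree'
      exact ⟨z, hz1, hz2⟩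
    · push_neg at hc
      -- for each v ∈ W, T1 and T2 take opposite constant values at v
      have hopp : ∀ v ∈ W, ∀ x ∈ T1, ∀ y ∈ T2, x v ≠ y v := by
        intro v hv x hx y hy he
        exact hc v hv (y v) ⟨x, hx, he⟩ y hy rfl
      -- T1 is a singleton
      have hconst1 : ∀ x ∈ T1, x = x1 := by
        intro x hx
        funext a
        by_cases haW : a ∈ W
        · -- x a ≠ y1 a and x1 a ≠ y1 a, Bool
          exact bool_eq_of_ne_of_ne (hopp a haW x hx y1 hy1) (hopp a haW x1 hx1 y1 hy1)
        · rw [hagree x hx y1 hy1 a haW, hagree x1 hx1 y1 hy1 a haW]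
      have hconst2 : ∀ y ∈ T2, y = y1 := by
        intro y hy
        funext a
        by_cases haW : a ∈ W
        · exact bool_eq_of_ne_of_ne (fun he => hopp a haW x1 hx1 y hy he.symm)
            (fun he => hopp a haW x1 hx1 y1 hy1 he.symm)
        · rw [← hagree x1 hx1 y hy a haW, hagree x1 hx1 y1 hy1 a haW]
      by_cases hW : W = ∅
      · -- T1 = T2 = same singleton
        have : x1 = y1 := funext fun a => hagree x1 hx1 y1 hy1 a (by simp [hW])
        exact ⟨x1, hx1, this ▸ hy1⟩
      · -- two quasi-fixed points differing exactly on W ⇒ positive cycle, contradiction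
        exfalso
        obtain ⟨v, hv⟩ := Finset.nonempty_iff_ne_empty.2 hW
        have hdiff : ∀ a, x1 a ≠ y1 a → a ∈ W := by
          intro a ha
          by_contra haW
          exact ha (hagree x1 hx1 y1 hy1 a haW)
        have hfix1 : ∀ a, x1 a ≠ y1 a → f a x1 = x1 a := by
          intro a ha
          by_contra hne
          have hstep : asyncStepOn W f x1 (Function.update x1 a (f a x1)) :=
            ⟨a, hdiff a ha, hne, rfl⟩
          have := hconst1 _ (hT1.2 x1 hx1 _ hstep)
          have := congrFun this a
          rw [Function.update_self] at this
          exact hne this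
        have hfix2 : ∀ a, x1 a ≠ y1 a → f a y1 = y1 a := by
          intro a ha
          by_contra hne
          have hstep : asyncStepOn W f y1 (Function.update y1 a (f a y1)) :=
            ⟨a, hdiff a ha, hne, rfl⟩
          have := hconst2 _ (hT2.2 y1 hy1 _ hstep)
          have := congrFun this a
          rw [Function.update_self] at this
          exact hne this
        have hxyne : x1 ≠ y1 := by
          intro he
          exact hopp v hv x1 hx1 y1 hy1 (congrFun he v)
        obtain ⟨c, hcpos⟩ := posCycle_of_two f x1 y1 hxyne hfix1 hfix2
        exact h c hcpos
lemma isTrapSet_iff_trapOn (f : A → (A → Bool) → Bool) (T : Set (A → Bool)) :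
    IsTrapSet f T ↔ TrapOn Finset.univ f T := by
  unfold IsTrapSet TrapOn asyncStep asyncStepOn
  simp

lemma trap_inter (f : A → (A → Bool) → Bool) (h : NoPosCycle (ig f))
    {T1 T2 : Set (A → Bool)} (h1 : IsTrapSet f T1) (h2 : IsTrapSet f T2) :
    (T1 ∩ T2).Nonempty := by
  refine trapOn_inter f h Finset.univ T1 T2 ((isTrapSet_iff_trapOn f T1).1 h1)
    ((isTrapSet_iff_trapOn f T2).1 h2) ?_
  intro x _ y _ a ha
  exact absurd (Finset.mem_univ a) ha

lemma exists_attractor_subset (f : A → (A → Bool) → Bool) :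
    ∀ n : ℕ, ∀ T : Set (A → Bool), T.ncard ≤ n → IsTrapSet f T →
      ∃ S, IsAttractor f S ∧ S ⊆ T := by
  intro n
  induction n with
  | zero =>
    intro T hn hT
    obtain ⟨z, hz⟩ := hT.1
    have : 0 < T.ncard := (Set.ncard_pos (Set.toFinite T)).2 ⟨z, hz⟩
    omega
  | succ n ih =>
    intro T hn hT
    by_cases hmin : ∀ T', IsTrapSet f T' → T' ⊆ T → T' = T
    · exact ⟨T, ⟨hT, hmin⟩, subset_rfl⟩
    · push_neg at hmin
      obtain ⟨T', hT', hsub, hne⟩ := hmin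
      have hss : T' ⊂ T := ssubset_of_subset_of_ne hsub hne
      have : T'.ncard < T.ncard := Set.ncard_lt_ncard hss (Set.toFinite T)
      obtain ⟨S, hS, hS'⟩ := ih T' (by omega) hT'
      exact ⟨S, hS, hS'.trans hsub⟩

lemma unique_attractor (f : A → (A → Bool) → Bool) (h : NoPosCycle (ig f)) :
    ∃! S : Set (A → Bool), IsAttractor f S := by
  have huniv : IsTrapSet f (Set.univ : Set (A → Bool)) :=
    ⟨⟨fun _ => false, trivial⟩, fun _ _ _ _ => trivial⟩
  obtain ⟨S, hS, -⟩ := exists_attractor_subset f (Set.univ : Set (A → Bool)).ncard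
    Set.univ le_rfl huniv
  refine ⟨S, hS, ?_⟩
  intro S' hS'
  have hint : (S' ∩ S).Nonempty := trap_inter f h hS'.1 hS.1
  have htrap : IsTrapSet f (S' ∩ S) :=
    ⟨hint, fun x hx y hxy => ⟨hS'.1.2 x hx.1 y hxy, hS.1.2 x hx.2 y hxy⟩⟩
  have e1 : S' ∩ S = S := hS.2 _ htrap Set.inter_subset_right
  have e2 : S' ∩ S = S' := hS'.2 _ htrap Set.inter_subset_left
  rw [← e1, e2]

-- trap space machinery
lemma gamma_nonempty (m : A → TV3) : (gamma m).Nonempty := by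
  refine ⟨fun a => match m a with | TV3.tru => true | _ => false, ?_⟩
  intro a ha
  cases hma : m a
  · simp [ofBool, hma]
  · exact absurd hma ha
  · simp [ofBool, hma]

lemma gamma_trapSet {f : A → (A → Bool) → Bool} {m : A → TV3}
    (hm : IsAsyncTrapSpace f m) : IsTrapSet f (gamma m) :=
  ⟨gamma_nonempty m, hm⟩

def unkCount (m : A → TV3) : ℕ := (Finset.univ.filter fun a => m a = TV3.unk).card

lemma unk_subset {m m' : A → TV3} (hle : leSI m' m) :
    (Finset.univ.filter fun a => m' a = TV3.unk) ⊆ (Finset.univ.filter fun a => m a = TV3.unk) := by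
  intro a ha
  simp only [Finset.mem_filter, Finset.mem_univ, true_and] at ha ⊢
  rcases hle a with he | he
  · rw [← he]; exact ha
  · exact he

lemma exists_min_trapspace (f : A → (A → Bool) → Bool) :
    ∀ n : ℕ, ∀ m : A → TV3, unkCount m ≤ n → IsAsyncTrapSpace f m →
      ∃ m₀, IsAsyncTrapSpace f m₀ ∧
        (∀ m', IsAsyncTrapSpace f m' → leSI m' m₀ → m' = m₀) := by
  intro n
  induction n with
  | zero =>
    intro m hn hm
    refine ⟨m, hm, ?_⟩
    intro m' hm' hle
    funext a
    rcases hle a with he | he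
    · exact he
    · exfalso
      have : a ∈ Finset.univ.filter fun a => m a = TV3.unk := by
        simp [he]
      have := Finset.card_pos.2 ⟨a, this⟩
      unfold unkCount at hn
      omega
  | succ n ih =>
    intro m hn hm
    by_cases hmin : ∀ m', IsAsyncTrapSpace f m' → leSI m' m → m' = m
    · exact ⟨m, hm, hmin⟩
    · push_neg at hmin
      obtain ⟨m', hm', hle, hne⟩ := hmin
      have hss : (Finset.univ.filter fun a => m' a = TV3.unk)
          ⊂ (Finset.univ.filter fun a => m a = TV3.unk) := by
        refine Finset.ssubset_iff_of_subset (unk_subset hle) |>.2 ?_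
        obtain ⟨a, ha⟩ : ∃ a, m' a ≠ m a := by
          by_contra hc; push_neg at hc; exact hne (funext hc)
        have hmu : m a = TV3.unk := by
          rcases hle a with he | he
          · exact absurd he ha
          · exact he
        have hmu' : m' a ≠ TV3.unk := fun he => ha (he.trans hmu.symm)
        exact ⟨a, by simp [hmu], by simp [hmu']⟩
      have : unkCount m' < unkCount m := Finset.card_lt_card hss
      obtain ⟨m₀, h1, h2⟩ := ih m' (by unfold unkCount at *; omega) hm'
      exact ⟨m₀, h1, h2⟩

lemma unk_trapspace (f : A → (A → Bool) → Bool) :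
    IsAsyncTrapSpace f (fun _ => TV3.unk) := by
  intro s _ y _
  intro a ha
  exact absurd rfl ha

lemma unique_min_trapspace (f : A → (A → Bool) → Bool) (h : NoPosCycle (ig f)) :
    ∃! m : A → TV3, IsAsyncTrapSpace f m ∧
      ∀ m', IsAsyncTrapSpace f m' → leSI m' m → m' = m := by
  obtain ⟨m₀, h1, h2⟩ := exists_min_trapspace f (unkCount (fun _ => TV3.unk))
    (fun _ => TV3.unk) le_rfl (unk_trapspace f)
  refine ⟨m₀, ⟨h1, h2⟩, ?_⟩
  rintro m1 ⟨hm1, hmin1⟩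
  -- common state
  obtain ⟨x, hx1, hx0⟩ := trap_inter f h (gamma_trapSet hm1) (gamma_trapSet h1)
  -- meet
  set m : A → TV3 := fun a => if m1 a = TV3.unk then m₀ a else m1 a with hmdef
  have hagr : ∀ a, m1 a ≠ TV3.unk → m₀ a ≠ TV3.unk → m1 a = m₀ a := by
    intro a hu1 hu0
    rw [← hx1 a hu1, ← hx0 a hu0]
  have hmem : ∀ J, J ∈ gamma m ↔ (J ∈ gamma m1 ∧ J ∈ gamma m₀) := by
    intro J
    constructor
    · intro hJ
      constructor
      · intro a ha
        have : m a = m1 a := by rw [hmdef]; simp [ha]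
        rw [← this]
        exact hJ a (by rw [this]; exact ha)
      · intro a ha
        by_cases h1a : m1 a = TV3.unk
        · have : m a = m₀ a := by rw [hmdef]; simp [h1a]
          rw [← this]
          exact hJ a (by rw [this]; exact ha)
        · have hma : m a = m1 a := by rw [hmdef]; simp [h1a]
          rw [← hagr a h1a ha, ← hma]
          exact hJ a (by rw [hma]; exact h1a)
    · rintro ⟨hJ1, hJ0⟩ a ha
      by_cases h1a : m1 a = TV3.unk
      · have hma : m a = m₀ a := by rw [hmdef]; simp [h1a]
        rw [hma] at ha ⊢
        exact hJ0 a ha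
      · have hma : m a = m1 a := by rw [hmdef]; simp [h1a]
        rw [hma] at ha ⊢
        exact hJ1 a ha
  have hmtrap : IsAsyncTrapSpace f m := by
    intro s hs y hsy
    have := (hmem s).1 hs
    exact (hmem y).2 ⟨hm1 s this.1 y hsy, h1 s this.2 y hsy⟩
  have hle1 : leSI m m1 := by
    intro a
    by_cases h1a : m1 a = TV3.unk
    · exact Or.inr h1a
    · exact Or.inl (by rw [hmdef]; simp [h1a])
  have hle0 : leSI m m₀ := by
    intro a
    by_cases h0a : m₀ a = TV3.unk
    · exact Or.inr h0a
    · by_cases h1a : m1 a = TV3.unk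
      · exact Or.inl (by rw [hmdef]; simp [h1a])
      · exact Or.inl (by rw [hmdef]; simp [h1a, hagr a h1a h0a])
  have e1 : m = m1 := hmin1 m hmtrap hle1
  have e0 : m = m₀ := h2 m hmtrap hle0
  rw [← e1, e0]

end BNAux

/-- if the influence graph has no positive cycle, then the
asynchronous STG has a unique attractor; consequently f has a unique
subset-minimal trap space. -/
theorem stmt10 {A : Type*} [Fintype A] [DecidableEq A]
    (f : A → (A → Bool) → Bool) (h : NoPosCycle (ig f)) :
    (∃! S : Set (A → Bool), IsAttractor f S) ∧
    (∃! m : A → TV3, IsAsyncTrapSpace f m ∧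
      ∀ m', IsAsyncTrapSpace f m' → leSI m' m → m' = m) := by
  exact ⟨BNAux.unique_attractor f h, BNAux.unique_min_trapspace f h⟩
end

section
/- Let f be a Boolean network on finitely many variables and U⁺ a set of variables intersecting every positive cycle of the influence graph of f. Then the number of attractors of the asynchronous state transition graph of f is at most 2^{|U⁺|}. -/
section MyAux
set_option linter.unusedSectionVars false
variable {A : Type*} [Fintype A] [DecidableEq A]

lemma flip_lemma (g : (A → Bool) → Bool) (D : Finset A) :
    ∀ x y : A → Bool, (∀ w, x w ≠ y w → w ∈ D) → g x ≠ g y →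
      ∃ u ∈ D, ∃ z, g (Function.update z u (x u)) = g x ∧ g (Function.update z u (y u)) = g y := by
  classical
  induction D using Finset.induction with
  | empty =>
    intro x y hsub hne
    exfalso
    apply hne
    congr 1
    funext w
    by_contra hw
    exact absurd (hsub w hw) (by simp)
  | @insert a D' ha ih =>
    intro x y hsub hne
    set y' := Function.update y a (x a) with hy'
    by_cases hgy' : g y' = g x
    · refine ⟨a, Finset.mem_insert_self _ _, y', ?_, ?_⟩
      · rw [hy', Function.update_idem, ← hy', hgy']
      · rw [hy', Function.update_idem, Function.update_eq_self]
    · obtain ⟨u, hu, z, h1, h2⟩ := ih x y' (by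
        intro w hw
        by_cases hwa : w = a
        · subst hwa; simp [hy'] at hw
        · have := hsub w (by simpa [hy', Function.update_of_ne hwa] using hw)
          exact Finset.mem_of_mem_insert_of_ne this hwa)
        (fun h => hgy' h.symm)
      have hua : u ≠ a := by rintro rfl; exact ha hu
      refine ⟨u, Finset.mem_insert_of_mem hu, z, h1, ?_⟩
      rw [hy', Function.update_of_ne hua] at h2
      rw [h2]
      revert hgy' hne
      cases g y' <;> cases g y <;> cases g x <;> simp

lemma parity_lemma (n : ℕ) (b : Fin (n+1) → Bool) :
    (Finset.univ.filter fun i => b i ≠ b (i+1)).card % 2 = 0 := by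
  classical
  have hz : ((Finset.univ.filter fun i => b i ≠ b (i+1)).card : ZMod 2) = 0 := by
    rw [Finset.card_filter]
    push_cast
    have : ∀ i : Fin (n+1), (if b i ≠ b (i+1) then (1:ZMod 2) else 0)
        = (if b i then (1:ZMod 2) else 0) + (if b (i+1) then 1 else 0) := by
      intro i; cases hb : b i <;> cases hb2 : b (i+1) <;> simp [hb, hb2] <;> decide
    rw [Finset.sum_congr rfl fun i _ => this i, Finset.sum_add_distrib]
    have he : (∑ i : Fin (n+1), (if b (i+1) then (1:ZMod 2) else 0))
        = ∑ i : Fin (n+1), (if b i then (1:ZMod 2) else 0) :=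
      Fintype.sum_equiv (Equiv.addRight 1) _ _ (fun i => rfl)
    rw [he, ← two_mul, show (2:ZMod 2) = 0 from rfl, zero_mul]
  have := (ZMod.natCast_eq_zero_iff _ 2).mp hz
  omega


lemma arc_extract (f : A → (A → Bool) → Bool) (x y : A → Bool) (v : A)
    (hx : f v x = x v) (hy : f v y = y v) (hv : x v ≠ y v) :
    ∃ u, x u ≠ y u ∧ ig f u v (if x u = x v then Sign.pos else Sign.neg) := by
  classical
  obtain ⟨u, hu, z, h1, h2⟩ := flip_lemma (f v) (Finset.univ.filter fun w => x w ≠ y w)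
    x y (fun w hw => by simpa using hw) (by rw [hx, hy]; exact hv)
  rw [hx] at h1; rw [hy] at h2
  have hxyu : x u ≠ y u := by simpa using hu
  refine ⟨u, hxyu, ?_⟩
  cases hxu : x u <;> cases hxv : x v
  · -- x u = false, x v = false : pos arc
    simp only [if_pos rfl]
    have hyu : y u = true := by revert hxyu; rw [hxu]; cases y u <;> simp
    have hyv : y v = true := by revert hv; rw [hxv]; cases y v <;> simp
    exact ⟨z, by rw [hxu] at h1; rw [hyu] at h2; rw [h1, hxv, h2, hyv]; exact Bool.false_lt_true⟩
  · simp only [hxu, hxv, if_neg (by simp : ¬ (false = true))]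
    have hyu : y u = true := by revert hxyu; rw [hxu]; cases y u <;> simp
    have hyv : y v = false := by revert hv; rw [hxv]; cases y v <;> simp
    exact ⟨z, by rw [hxu] at h1; rw [hyu] at h2; rw [h2, hyv, h1, hxv]; exact Bool.false_lt_true⟩
  · simp only [hxu, hxv, if_neg (by simp : ¬ (true = false))]
    have hyu : y u = false := by revert hxyu; rw [hxu]; cases y u <;> simp
    have hyv : y v = true := by revert hv; rw [hxv]; cases y v <;> simp
    exact ⟨z, by rw [hxu] at h1; rw [hyu] at h2; rw [h1, hxv, h2, hyv]; exact Bool.false_lt_true⟩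
  · simp only [if_pos rfl]
    have hyu : y u = false := by revert hxyu; rw [hxu]; cases y u <;> simp
    have hyv : y v = false := by revert hv; rw [hxv]; cases y v <;> simp
    exact ⟨z, by rw [hxu] at h1; rw [hyu] at h2; rw [h2, hyv, h1, hxv]; exact Bool.false_lt_true⟩

lemma key_lemma (f : A → (A → Bool) → Bool) (x y : A → Bool) (hxy : x ≠ y)
    (hfix : ∀ v, x v ≠ y v → f v x = x v ∧ f v y = y v) :
    ∃ c : SCycle (ig f), c.IsPos ∧ ∀ i, x (c.vtx i) ≠ y (c.vtx i) := by
  classical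
  have harc : ∀ v, ∃ u, (x v ≠ y v → (x u ≠ y u ∧
      ig f u v (if x u = x v then Sign.pos else Sign.neg))) := by
    intro v
    by_cases hv : x v ≠ y v
    · obtain ⟨u, h1, h2⟩ := arc_extract f x y v (hfix v hv).1 (hfix v hv).2 hv
      exact ⟨u, fun _ => ⟨h1, h2⟩⟩
    · exact ⟨v, fun h => absurd h hv⟩
  choose p hp using harc
  obtain ⟨v₀, hv₀⟩ : ∃ v, x v ≠ y v := by
    by_contra hc; push_neg at hc; exact hxy (funext hc)
  have hiter : ∀ m, x (p^[m] v₀) ≠ y (p^[m] v₀) := by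
    intro m
    induction m with
    | zero => exact hv₀
    | succ m ihm => rw [Function.iterate_succ_apply']; exact (hp _ ihm).1
  obtain ⟨i, j, hij, heq⟩ : ∃ i j : ℕ, i < j ∧ p^[i] v₀ = p^[j] v₀ := by
    obtain ⟨i, j, hne, heq⟩ := Finite.exists_ne_map_eq_of_infinite (fun m : ℕ => p^[m] v₀)
    rcases lt_or_gt_of_ne hne with h | h
    · exact ⟨i, j, h, heq⟩
    · exact ⟨j, i, h, heq.symm⟩
  have heq' : p^[j - i] (p^[i] v₀) = p^[i] v₀ := by
    rw [← Function.iterate_add_apply, show j - i + i = j from by omega]; exact heq.symm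
  set w := p^[i] v₀ with hw
  set k := j - i with hk
  have hk1 : 1 ≤ k := by omega
  have hpk : p^[k] w = w := heq'
  set n := k - 1 with hn
  have hnk : n + 1 = k := by omega
  set vtx : Fin (n+1) → A := fun m => p^[k - m.val] w with hvtx
  have hmem : ∀ m : Fin (n+1), x (vtx m) ≠ y (vtx m) := by
    intro m
    have : ∀ l, x (p^[l] w) ≠ y (p^[l] w) := by
      intro l; rw [hw, ← Function.iterate_add_apply]; exact hiter _
    exact this _
  have hstep : ∀ i : Fin (n+1), vtx i = p (vtx (i+1)) := by
    intro m
    by_cases hm : m.val < n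
    · have h1 : ((m+1 : Fin (n+1)).val) = m.val + 1 := by
        rw [Fin.add_def]; simp; omega
      rw [hvtx]
      simp only [h1]
      have : k - m.val = (k - (m.val + 1)) + 1 := by omega
      rw [this, Function.iterate_succ_apply']
    · have hmn : m.val = n := by omega
      have h1 : ((m+1 : Fin (n+1)).val) = 0 := by
        rw [Fin.add_def]; simp [hmn]
      rw [hvtx]
      simp only [h1, hmn, Nat.sub_zero, hpk]
      have : k - n = 1 := by omega
      rw [this]
      rfl
  refine ⟨⟨n, vtx, fun i => if x (vtx i) = x (vtx (i+1)) then Sign.pos else Sign.neg,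
    ?_⟩, ?_, hmem⟩
  · intro i
    have := (hp (vtx (i+1)) (hmem (i+1))).2
    rw [← hstep i] at this
    exact this
  · show (Finset.univ.filter fun i =>
      (if x (vtx i) = x (vtx (i+1)) then Sign.pos else Sign.neg) = Sign.neg).card % 2 = 0
    have hfe : (Finset.univ.filter fun i =>
        (if x (vtx i) = x (vtx (i+1)) then Sign.pos else Sign.neg) = Sign.neg)
        = Finset.univ.filter fun i => (fun m => x (vtx m)) i ≠ (fun m => x (vtx m)) (i+1) := by
      apply Finset.filter_congr
      intro i _
      by_cases hc : x (vtx i) = x (vtx (i+1)) <;> simp [hc]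
    rw [hfe]
    exact parity_lemma n _

end MyAux


section MyMain
set_option linter.unusedSectionVars false
variable {A : Type*} [Fintype A] [DecidableEq A]

lemma bool_resolve {a b c : Bool} (h1 : a ≠ b) (h2 : c ≠ b) : a = c := by
  cases a <;> cases b <;> cases c <;> simp_all

lemma attractor_eq_of_inter (f : A → (A → Bool) → Bool) {S T : Set (A → Bool)}
    (hS : IsAttractor f S) (hT : IsAttractor f T) (hne : (S ∩ T).Nonempty) : S = T := by
  have htrap : IsTrapSet f (S ∩ T) :=
    ⟨hne, fun x hx y hxy => ⟨hS.1.2 x hx.1 y hxy, hT.1.2 x hx.2 y hxy⟩⟩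
  exact (hS.2 _ htrap Set.inter_subset_left).symm.trans (hT.2 _ htrap Set.inter_subset_right)

lemma trap_contains_attractor (f : A → (A → Bool) → Bool) :
    ∀ (n : ℕ) (S : Set (A → Bool)), S.ncard ≤ n → IsTrapSet f S →
      ∃ T, IsAttractor f T ∧ T ⊆ S := by
  intro n
  induction n with
  | zero =>
    intro S hcard htrap
    exfalso
    have := (Set.ncard_pos S.toFinite).mpr htrap.1
    omega
  | succ n ih =>
    intro S hcard htrap
    by_cases hA : IsAttractor f S
    · exact ⟨S, hA, subset_rfl⟩
    · have : ∃ T, IsTrapSet f T ∧ T ⊆ S ∧ T ≠ S := by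
        by_contra hc
        push_neg at hc
        exact hA ⟨htrap, fun T hT hTS => hc T hT hTS⟩
      obtain ⟨T, hTtrap, hTS, hTne⟩ := this
      have hss : T ⊂ S := ssubset_of_subset_of_ne hTS hTne
      have hlt : T.ncard < S.ncard := Set.ncard_lt_ncard hss S.toFinite
      obtain ⟨T', hT', hT'T⟩ := ih T (by omega) hTtrap
      exact ⟨T', hT', hT'T.trans hTS⟩

end MyMain

/-- if U⁺ meets every positive cycle of the influence graph, the
asynchronous STG has at most 2^|U⁺| attractors. -/
theorem stmt11 {A : Type*} [Fintype A] [DecidableEq A]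
    (f : A → (A → Bool) → Bool) (U : Finset A) (h : IsPFVS (ig f) U) :
    {S : Set (A → Bool) | IsAttractor f S}.ncard ≤ 2 ^ U.card := by
  classical
  set g : A → (A → Bool) → Bool := fun v s => if v ∈ U then s v else f v s with hg
  have hgU : ∀ u ∈ U, ∀ s : A → Bool, g u s = s u := fun u hu s => if_pos hu
  have hgnU : ∀ v ∉ U, ∀ s : A → Bool, g v s = f v s := fun v hv s => if_neg hv
  have hstep : ∀ x y, asyncStep g x y → asyncStep f x y := by
    rintro x y ⟨v, hv, hy⟩
    have hvU : v ∉ U := fun hm => hv (hgU v hm x)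
    exact ⟨v, by rw [← hgnU v hvU]; exact hv, by rw [hy, hgnU v hvU]⟩
  have htrapfg : ∀ S, IsTrapSet f S → IsTrapSet g S :=
    fun S hS => ⟨hS.1, fun x hx y hxy => hS.2 x hx y (hstep x y hxy)⟩
  -- U-coordinates are constant on each g-attractor
  have hconst : ∀ T, IsAttractor g T → ∀ x ∈ T, ∀ y ∈ T, ∀ u ∈ U, x u = y u := by
    intro T hT x hx y hy u hu
    have hRtrap : IsTrapSet g {z | Relation.ReflTransGen (asyncStep g) x z} :=
      ⟨⟨x, Relation.ReflTransGen.refl⟩, fun a ha b hab => Relation.ReflTransGen.tail ha hab⟩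
    have hRT : {z | Relation.ReflTransGen (asyncStep g) x z} ⊆ T := by
      intro z hz
      induction hz with
      | refl => exact hx
      | tail _ hbc ihab => exact hT.1.2 _ ihab _ hbc
    have hy' : Relation.ReflTransGen (asyncStep g) x y := by
      have : y ∈ {z | Relation.ReflTransGen (asyncStep g) x z} := by
        rw [hT.2 _ hRtrap hRT]; exact hy
      exact this
    clear hy
    induction hy' with
    | refl => rfl
    | tail _ hbc ih =>
      obtain ⟨v, hv, hb⟩ := hbc
      have hvU : v ∉ U := fun hm => hv (hgU v hm _)
      rw [hb, Function.update_of_ne (show u ≠ v from fun hh => hvU (hh ▸ hu))]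
      exact ih
  -- two distinct g-attractors cannot agree on U
  have hkey : ∀ T T', IsAttractor g T → IsAttractor g T' → T ≠ T' →
      ∀ x₀ ∈ T, ∀ y₀ ∈ T', (∀ u ∈ U, x₀ u = y₀ u) → False := by
    intro T T' hT hT' hneq x₀ hx₀ y₀ hy₀ hagree
    have hdisj : ∀ z, z ∈ T → z ∈ T' → False := fun z h1 h2 =>
      hneq (attractor_eq_of_inter g hT hT' ⟨z, h1, h2⟩)
    have hDne : {m | ∃ a ∈ T, ∃ b ∈ T',
        (Finset.univ.filter fun v => a v ≠ b v).card = m}.Nonempty :=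
      ⟨_, x₀, hx₀, y₀, hy₀, rfl⟩
    obtain ⟨x, hx, y, hy, hdxy⟩ := Nat.sInf_mem hDne
    have hmin : ∀ a ∈ T, ∀ b ∈ T',
        sInf {m | ∃ a ∈ T, ∃ b ∈ T', (Finset.univ.filter fun v => a v ≠ b v).card = m}
          ≤ (Finset.univ.filter fun v => a v ≠ b v).card :=
      fun a ha b hb => Nat.sInf_le ⟨a, ha, b, hb, rfl⟩
    have hagree' : ∀ u ∈ U, x u = y u := fun u hu =>
      ((hconst T hT x hx x₀ hx₀ u hu).trans (hagree u hu)).trans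
        (hconst T' hT' y₀ hy₀ y hy u hu)
    have hxy : x ≠ y := fun hh => hdisj x hx (hh ▸ hy)
    have hfixg : ∀ v, x v ≠ y v → g v x = x v ∧ g v y = y v := by
      intro v hv
      have hvmem : v ∈ Finset.univ.filter fun w => x w ≠ y w := by simp [hv]
      have hcardpos := Finset.card_pos.mpr ⟨v, hvmem⟩
      constructor
      · by_contra hcon
        have hx'T : Function.update x v (g v x) ∈ T := hT.1.2 x hx _ ⟨v, hcon, rfl⟩
        have hferase : (Finset.univ.filter fun w => Function.update x v (g v x) w ≠ y w)
            = (Finset.univ.filter fun w => x w ≠ y w).erase v := by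
          ext w
          simp only [Finset.mem_erase, Finset.mem_filter, Finset.mem_univ, true_and]
          constructor
          · intro hw
            by_cases hwv : w = v
            · subst hwv
              exfalso; apply hw
              rw [Function.update_self]
              exact bool_resolve hcon (fun hh => hv hh.symm)
            · exact ⟨hwv, by rwa [Function.update_of_ne hwv] at hw⟩
          · rintro ⟨hwv, hw⟩
            rw [Function.update_of_ne hwv]; exact hw
        have hle := hmin _ hx'T y hy
        have hcard2 : (Finset.univ.filter fun w => Function.update x v (g v x) w ≠ y w).card
            = (Finset.univ.filter fun w => x w ≠ y w).card - 1 := by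
          rw [hferase, Finset.card_erase_of_mem hvmem]
        have hle2 := hle.trans_eq hcard2
        rw [← hdxy] at hle2
        exact absurd (hle2.trans_lt (Nat.sub_lt hcardpos Nat.one_pos)) (lt_irrefl _)
      · by_contra hcon
        have hy'T : Function.update y v (g v y) ∈ T' := hT'.1.2 y hy _ ⟨v, hcon, rfl⟩
        have hferase : (Finset.univ.filter fun w => x w ≠ Function.update y v (g v y) w)
            = (Finset.univ.filter fun w => x w ≠ y w).erase v := by
          ext w
          simp only [Finset.mem_erase, Finset.mem_filter, Finset.mem_univ, true_and]
          constructor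
          · intro hw
            by_cases hwv : w = v
            · subst hwv
              exfalso; apply hw
              rw [Function.update_self]
              exact bool_resolve hv hcon
            · exact ⟨hwv, by rwa [Function.update_of_ne hwv] at hw⟩
          · rintro ⟨hwv, hw⟩
            rw [Function.update_of_ne hwv]; exact hw
        have hle := hmin x hx _ hy'T
        have hcard2 : (Finset.univ.filter fun w => x w ≠ Function.update y v (g v y) w).card
            = (Finset.univ.filter fun w => x w ≠ y w).card - 1 := by
          rw [hferase, Finset.card_erase_of_mem hvmem]
        have hle2 := hle.trans_eq hcard2
        rw [← hdxy] at hle2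
        exact absurd (hle2.trans_lt (Nat.sub_lt hcardpos Nat.one_pos)) (lt_irrefl _)
    obtain ⟨c, hcpos, hcmem⟩ := key_lemma g x y hxy hfixg
    have hnotU : ∀ i, c.vtx i ∉ U := fun i hu => hcmem i (hagree' _ hu)
    have hig : ∀ u v s, v ∉ U → ig g u v s → ig f u v s := by
      intro u v s hv higv
      cases s
      · obtain ⟨z, hz⟩ := higv
        exact ⟨z, by rwa [hgnU v hv, hgnU v hv] at hz⟩
      · obtain ⟨z, hz⟩ := higv
        exact ⟨z, by rwa [hgnU v hv, hgnU v hv] at hz⟩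
    obtain ⟨i, hiU⟩ := h ⟨c.n, c.vtx, c.sgn, fun i => hig _ _ _ (hnotU (i+1)) (c.arc i)⟩ hcpos
    exact hnotU i hiU
  -- counting
  have hφex : ∀ S : Set (A → Bool), IsAttractor f S → ∃ T, IsAttractor g T ∧ T ⊆ S :=
    fun S hS => trap_contains_attractor g S.ncard S le_rfl (htrapfg S hS.1)
  choose! φ hφ1 hφ2 using hφex
  have h1 : {S : Set (A → Bool) | IsAttractor f S}.ncard ≤
      {S : Set (A → Bool) | IsAttractor g S}.ncard := by
    refine Set.ncard_le_ncard_of_injOn φ (fun S hS => hφ1 S hS) ?_ (Set.toFinite _)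
    intro S hS S' hS' heq
    obtain ⟨z, hz⟩ := (hφ1 S hS).1.1
    exact attractor_eq_of_inter f hS hS' ⟨z, hφ2 S hS hz, hφ2 S' hS' (heq ▸ hz)⟩
  have hrep : ∀ T : Set (A → Bool), IsAttractor g T →
      (if hh : T.Nonempty then hh.some else (fun _ => false)) ∈ T := by
    intro T hT
    rw [dif_pos hT.1.1]
    exact hT.1.1.some_mem
  have h2 : {S : Set (A → Bool) | IsAttractor g S}.ncard ≤
      (Set.univ : Set ({a // a ∈ U} → Bool)).ncard := by
    refine Set.ncard_le_ncard_of_injOn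
      (fun T (u : {a // a ∈ U}) =>
        (if hh : T.Nonempty then hh.some else (fun _ => false)) u.val)
      (fun _ _ => Set.mem_univ _) ?_ (Set.toFinite _)
    intro T hT T' hT' heq
    by_contra hneq
    exact hkey T T' hT hT' hneq _ (hrep T hT) _ (hrep T' hT')
      (fun u hu => congrFun heq ⟨u, hu⟩)
  have h3 : (Set.univ : Set ({a // a ∈ U} → Bool)).ncard = 2 ^ U.card := by
    rw [Set.ncard_univ, Nat.card_eq_fintype_card, Fintype.card_fun,
      Fintype.card_bool, Fintype.card_coe]
  omega
end

section
/- If a finite ground normal logic program P is locally stratified (every cycle of its dependency graph contains no negative arc), then P has a unique regular model, and this regular model is 2-valued (it is the unique stable model of P). -/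
/-!
Local stratification gives a rank `ρ` on atoms (the number of atoms occurring negatively on
some path into the atom) that weakly increases along positive arcs and strictly increases along
negative ones. Let `Γ I` be the least 3-valued model of the reduct `P^I`; the stable partial models
are exactly the fixed points of `Γ`. On atoms of rank `≤ k`, `Γ I` depends only on `I` below rank
`k`. Hence two fixed points agree rank by rank, so there is at most one, and the iterates
`Γ^[j] ⊥` agree with their successors below rank `j`, so `Γ^[N] ⊥` is a fixed point once `N`
exceeds every rank. It is 2-valued because `Γ` preserves 2-valuedness.
-/

section Stratification

variable {A : Type*}

def SGraph.Reach_s12 (G : SGraph A) : A → A → Prop :=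
  Relation.ReflTransGen fun u v => ∃ s, G u v s

theorem SGraph.exists_path_of_reach {G : SGraph A} {x y : A} (h : G.Reach_s12 x y) :
    ∃ (n : ℕ) (vtx : Fin (n + 1) → A) (sgn : Fin n → Sign),
      vtx 0 = x ∧ vtx (Fin.last n) = y ∧ ∀ j, G (vtx j.castSucc) (vtx j.succ) (sgn j) := by
  induction h with
  | refl => exact ⟨0, fun _ => x, Fin.elim0, rfl, rfl, fun j => j.elim0⟩
  | tail _ hbc ih =>
    obtain ⟨n, vtx, sgn, h0, hlast, harc⟩ := ih
    obtain ⟨s, hs⟩ := hbc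
    refine ⟨n + 1, Fin.snoc vtx _, Fin.snoc sgn s, ?_, Fin.snoc_last .., fun j => ?_⟩
    · exact (Fin.snoc_castSucc (i := 0) ..).trans h0
    · induction j using Fin.lastCases with
      | last => simpa [Fin.succ_last, hlast] using hs
      | cast j => simp only [Fin.succ_castSucc, Fin.snoc_castSucc]; exact harc j

theorem SGraph.exists_sCycle_of_reach {G : SGraph A} {x y : A} {s : Sign} (hxy : G x y s)
    (hyx : G.Reach_s12 y x) : ∃ c : SCycle G, ∃ i, c.sgn i = s := by
  obtain ⟨n, vtx, sgn, h0, hlast, harc⟩ := exists_path_of_reach hyx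
  refine ⟨⟨n, vtx, Fin.lastCases s sgn, fun i => ?_⟩, Fin.last n, by simp⟩
  induction i using Fin.lastCases with
  | last => simpa [Fin.last_add_one, h0, hlast] using hxy
  | cast j => simpa [Fin.coeSucc_eq_succ] using harc j

def SGraph.negBelow (G : SGraph A) (a : A) : Set A :=
  {b | ∃ y, G b y .neg ∧ G.Reach_s12 y a}

theorem SGraph.negBelow_mono {G : SGraph A} {u v : A} {s : Sign} (h : G u v s) :
    G.negBelow u ⊆ G.negBelow v :=
  fun _ ⟨y, hby, hyu⟩ => ⟨y, hby, hyu.tail ⟨s, h⟩⟩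

theorem SGraph.mem_negBelow {G : SGraph A} {u v : A} (h : G u v .neg) : u ∈ G.negBelow v :=
  ⟨v, h, .refl⟩

theorem SGraph.not_mem_negBelow_self {G : SGraph A} (hG : ∀ c : SCycle G, ∀ i, c.sgn i ≠ .neg)
    (a : A) : a ∉ G.negBelow a := fun ⟨_, hay, hya⟩ =>
  let ⟨c, i, hi⟩ := exists_sCycle_of_reach hay hya
  hG c i hi

noncomputable def SGraph.negRank (G : SGraph A) (a : A) : ℕ :=
  (G.negBelow a).ncard

variable [Finite A]

theorem SGraph.negRank_le {G : SGraph A} {u v : A} {s : Sign} (h : G u v s) :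
    G.negRank u ≤ G.negRank v :=
  Set.ncard_le_ncard (negBelow_mono h)

theorem SGraph.negRank_lt {G : SGraph A} (hG : ∀ c : SCycle G, ∀ i, c.sgn i ≠ .neg) {u v : A}
    (h : G u v .neg) : G.negRank u < G.negRank v :=
  Set.ncard_lt_ncard <| Set.ssubset_iff_subset_ne.2
    ⟨negBelow_mono h, fun he => not_mem_negBelow_self hG u (he ▸ mem_negBelow h)⟩

end Stratification

section Programs

variable {A : Type*} [DecidableEq A]

structure IsStratification (P : Program A) (ρ : A → ℕ) : Prop where
  pos_le : ∀ {u v}, posArc P u v → ρ u ≤ ρ v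
  neg_lt : ∀ {u v}, negArc P u v → ρ u < ρ v

theorem LocallyStratified.isStratification_negRank [Finite A] {P : Program A}
    (h : LocallyStratified P) : IsStratification P (dg P).negRank where
  pos_le huv := SGraph.negRank_le (s := .pos) huv
  neg_lt huv := SGraph.negRank_lt h (G := dg P) huv

end Programs

namespace TV3

instance : Fintype TV3 := ⟨{fls, unk, tru}, fun x => by cases x <;> simp⟩

noncomputable instance : CompleteLinearOrder TV3 := Fintype.toCompleteLinearOrder TV3

end TV3

section Semantics

variable {A : Type*} [DecidableEq A] (P : Program A)

theorem Phi_mono (I : A → TV3) : Monotone (Phi P I) := by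
  intro K K' hK a
  refine Finset.sup_mono_fun fun r _ => ?_
  split_ifs
  · exact inf_le_inf_right _ (Finset.inf_mono_fun fun p _ => hK p)
  · exact le_rfl

noncomputable def leastReductModel (I : A → TV3) : A → TV3 :=
  OrderHom.lfp ⟨Phi P I, Phi_mono P I⟩

theorem Phi_leastReductModel (I : A → TV3) :
    Phi P I (leastReductModel P I) = leastReductModel P I :=
  OrderHom.map_lfp ⟨Phi P I, Phi_mono P I⟩

theorem leastReductModel_le {I K : A → TV3} (hK : Phi P I K ≤ K) : leastReductModel P I ≤ K :=
  OrderHom.lfp_le _ hK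

theorem isStablePartial_iff {I : A → TV3} : IsStablePartial P I ↔ leastReductModel P I = I := by
  refine ⟨fun hI => le_antisymm (leastReductModel_le P hI.1) ?_, fun hI => ?_⟩
  · exact hI.2 _ fun a => (congrFun (Phi_leastReductModel P I) a).le
  · have hfix := Phi_leastReductModel P I
    rw [hI] at hfix
    exact ⟨fun a => (congrFun hfix a).le, fun K hK => hI ▸ leastReductModel_le P hK⟩

variable {P} {ρ : A → ℕ}

theorem IsStratification.Phi_congr (hρ : IsStratification P ρ) {I I' K K' : A → TV3} {a : A}
    (hI : ∀ b, ρ b < ρ a → I b = I' b) (hK : ∀ b, ρ b ≤ ρ a → K b = K' b) :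
    Phi P I K a = Phi P I' K' a := by
  refine Finset.sup_congr rfl fun r hr => ?_
  split_ifs with hra
  · congr 1
    · exact Finset.inf_congr rfl fun p hp => hK p (hρ.pos_le ⟨r, hr, hra, hp⟩)
    · exact Finset.inf_congr rfl fun q hq => by rw [hI q (hρ.neg_lt ⟨r, hr, hra, hq⟩)]
  · rfl

theorem IsStratification.leastReductModel_le_of_eqOn (hρ : IsStratification P ρ)
    {I I' : A → TV3} {k : ℕ} (h : ∀ b, ρ b < k → I b = I' b) {a : A} (ha : ρ a ≤ k) :
    leastReductModel P I a ≤ leastReductModel P I' a := by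
  -- On ranks `≤ k` the reducts `P^I` and `P^I'` coincide, so this `K` is a model of `P^I`.
  set K : A → TV3 := fun b => if ρ b ≤ k then leastReductModel P I' b else ⊤ with hK
  have hmodel : Phi P I K ≤ K := by
    intro b
    by_cases hb : ρ b ≤ k
    · refine le_of_eq ?_
      calc Phi P I K b = Phi P I' (leastReductModel P I') b :=
            hρ.Phi_congr (fun c hc => h c (by omega)) (fun c hc => if_pos (by omega))
        _ = K b := by rw [Phi_leastReductModel]; exact (if_pos hb).symm
    · simp only [hK, if_neg hb, le_top]
  simpa only [hK, if_pos ha] using leastReductModel_le P hmodel a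

theorem IsStratification.leastReductModel_eqOn (hρ : IsStratification P ρ)
    {I I' : A → TV3} {k : ℕ} (h : ∀ b, ρ b < k → I b = I' b) {a : A} (ha : ρ a ≤ k) :
    leastReductModel P I a = leastReductModel P I' a :=
  le_antisymm (hρ.leastReductModel_le_of_eqOn h ha)
    (hρ.leastReductModel_le_of_eqOn (fun b hb => (h b hb).symm) ha)

theorem Phi_ne_unk {I K : A → TV3} (hI : Is2Valued I) (hK : Is2Valued K) (a : A) :
    Phi P I K a ≠ .unk := by
  let S : Set TV3 := {x | x ≠ .unk}
  have hsup : ∀ x ∈ S, ∀ y ∈ S, x ⊔ y ∈ S := by decide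
  have hinf : ∀ x ∈ S, ∀ y ∈ S, x ⊓ y ∈ S := by decide
  refine Finset.sup_mem S (by decide) hsup _ _ fun r _ => ?_
  split_ifs
  · refine hinf _ (Finset.inf_mem S (by decide) hinf _ _ fun p _ => hK p) _
      (Finset.inf_mem S (by decide) hinf _ _ fun q _ => ?_)
    cases h : I q
    exacts [by decide, absurd h (hI q), by decide]
  · decide

theorem leastReductModel_two_valued {I : A → TV3} (hI : Is2Valued I) :
    Is2Valued (leastReductModel P I) := by
  -- Rounding `unk` down to `fls` gives a smaller model of `P^I`: with `I` and `K` 2-valued the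
  -- reduct never produces `unk`.
  set K : A → TV3 := fun a => if leastReductModel P I a = .tru then .tru else .fls with hK
  have hK2 : Is2Valued K := fun a => by simp only [hK]; split_ifs <;> decide
  have hKle : K ≤ leastReductModel P I := fun a => by
    simp only [hK]; split_ifs with h
    exacts [h.ge, bot_le]
  have hmodel : Phi P I K ≤ K := fun a => by
    have hle : Phi P I K a ≤ leastReductModel P I a :=
      (Phi_mono P I hKle a).trans (congrFun (Phi_leastReductModel P I) a).le
    cases h : Phi P I K a
    · exact bot_le
    · exact absurd h (Phi_ne_unk hI hK2 a)
    · rw [h] at hle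
      simp only [hK, top_le_iff.mp hle]
      rfl
  rw [le_antisymm (leastReductModel_le P hmodel) hKle]
  exact hK2

theorem IsStratification.exists_isStablePartial_is2Valued [Finite A]
    (hρ : IsStratification P ρ) : ∃ I, IsStablePartial P I ∧ Is2Valued I := by
  set X : ℕ → A → TV3 := fun j => (leastReductModel P)^[j] ⊥
  have hstep : ∀ j, X (j + 1) = leastReductModel P (X j) := fun j =>
    Function.iterate_succ_apply' ..
  have hagree : ∀ j a, ρ a < j → X j a = X (j + 1) a := by
    intro j
    induction j with
    | zero => intro a ha; omega
    | succ j ih =>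
      intro a ha
      rw [hstep, hstep (j + 1)]
      exact hρ.leastReductModel_eqOn ih (by omega)
  have h2 : ∀ j, Is2Valued (X j) := by
    intro j
    induction j with
    | zero => exact fun _ => (by decide : (⊥ : TV3) ≠ .unk)
    | succ j ih => exact hstep j ▸ leastReductModel_two_valued ih
  obtain ⟨N, hN⟩ := (Set.finite_range ρ).bddAbove
  refine ⟨X (N + 1), (isStablePartial_iff P).2 ?_, h2 _⟩
  funext a
  rw [← hstep]
  exact (hagree _ a (Nat.lt_succ_of_le (hN ⟨a, rfl⟩))).symm

theorem IsStratification.isStablePartial_unique (hρ : IsStratification P ρ) {I I' : A → TV3}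
    (hI : IsStablePartial P I) (hI' : IsStablePartial P I') : I = I' := by
  have h : ∀ k a, ρ a < k → I a = I' a := by
    intro k
    induction k with
    | zero => intro a ha; omega
    | succ k ih =>
      intro a ha
      have e := hρ.leastReductModel_eqOn ih (Nat.le_of_lt_succ ha)
      rwa [(isStablePartial_iff P).1 hI, (isStablePartial_iff P).1 hI'] at e
  funext a
  exact h _ a (Nat.lt_succ_self _)

end Semantics

/-- a locally stratified finite ground program has a unique
regular model, which is 2-valued and is the unique stable model. -/
theorem stmt12 {A : Type*} [Fintype A] [DecidableEq A] (P : Program A)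
    (h : LocallyStratified P) :
    ∃ I : A → TV3, IsRegularModel P I ∧ (∀ I', IsRegularModel P I' → I' = I) ∧
      Is2Valued I ∧ IsStablePartial P I ∧
      ∀ I', IsStablePartial P I' → Is2Valued I' → I' = I := by
  have hρ := h.isStratification_negRank
  obtain ⟨I, hI, hI2⟩ := hρ.exists_isStablePartial_is2Valued
  have huniq : ∀ I', IsStablePartial P I' → I' = I := fun I' hI' =>
    hρ.isStablePartial_unique hI' hI
  exact ⟨I, ⟨hI, fun I' hI' _ => huniq I' hI'⟩, fun I' hI' => huniq I' hI'.1, hI2, hI,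
    fun I' hI' _ => huniq I' hI'⟩
end

section
/- If the dependency graph of a finite ground normal logic program P has no negative cycle, then every regular model of P is 2-valued (contains no atom assigned unknown). -/
section Proof13
open Classical
variable {A : Type*} [Fintype A] [DecidableEq A]
set_option linter.unusedSectionVars false

lemma tv3_le_iff {x y : TV3} :
    x ≤ y ↔ ((x = TV3.tru → y = TV3.tru) ∧ (TV3.unk ≤ x → TV3.unk ≤ y)) := by
  cases x <;> cases y <;> decide

lemma tv3_tru_le {x : TV3} (h : TV3.tru ≤ x) : x = TV3.tru := by
  cases x <;> first | rfl | exact absurd h (by decide)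

lemma tv3_le_unk {x : TV3} : x ≤ TV3.unk ↔ x ≠ TV3.tru := by cases x <;> decide

lemma tv3_unk_le {x : TV3} : TV3.unk ≤ x ↔ x ≠ TV3.fls := by cases x <;> decide

lemma phi_tru_iff (P : Program A) (I K : A → TV3) (a : A) :
    Phi P I K a = TV3.tru ↔
      ∃ r ∈ P, r.head = a ∧ (∀ p ∈ r.pos, K p = TV3.tru) ∧ (∀ q ∈ r.neg, I q = TV3.fls) := by
  constructor
  · intro h
    have h' : TV3.tru ≤ Phi P I K a := le_of_eq h.symm
    rw [Phi] at h'
    rcases (Finset.le_sup_iff (show (⊥ : TV3) < TV3.tru by decide)).1 h' with ⟨r, hr, hle⟩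
    by_cases hh : r.head = a
    · rw [if_pos hh] at hle
      rcases le_inf_iff.1 hle with ⟨h1, h2⟩
      refine ⟨r, hr, hh, ?_, ?_⟩
      · intro p hp
        exact tv3_tru_le (le_trans h1 (Finset.inf_le hp))
      · intro q hq
        have hx := le_trans h2 (Finset.inf_le hq)
        cases hIq : I q
        · rfl
        · rw [hIq] at hx; exact absurd hx (by decide)
        · rw [hIq] at hx; exact absurd hx (by decide)
    · rw [if_neg hh] at hle; exact absurd hle (by decide)
  · rintro ⟨r, hr, hh, hp, hq⟩
    rw [Phi]
    have hb : TV3.tru ≤ (if r.head = a then (r.pos.inf K) ⊓ (r.neg.inf fun q => TV3.neg (I q)) else TV3.fls) := by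
      rw [if_pos hh]
      refine le_inf (Finset.le_inf fun p hp' => ?_) (Finset.le_inf fun q hq' => ?_)
      · rw [hp p hp']
      · rw [hq q hq']; exact le_refl _
    exact le_antisymm le_top (le_trans hb (Finset.le_sup (f := fun r' => if r'.head = a then (r'.pos.inf K) ⊓ (r'.neg.inf fun q => TV3.neg (I q)) else TV3.fls) hr))

lemma phi_unk_iff (P : Program A) (I K : A → TV3) (a : A) :
    TV3.unk ≤ Phi P I K a ↔
      ∃ r ∈ P, r.head = a ∧ (∀ p ∈ r.pos, TV3.unk ≤ K p) ∧ (∀ q ∈ r.neg, I q ≤ TV3.unk) := by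
  constructor
  · intro h'
    rw [Phi] at h'
    rcases (Finset.le_sup_iff (show (⊥ : TV3) < TV3.unk by decide)).1 h' with ⟨r, hr, hle⟩
    by_cases hh : r.head = a
    · rw [if_pos hh] at hle
      rcases le_inf_iff.1 hle with ⟨h1, h2⟩
      refine ⟨r, hr, hh, ?_, ?_⟩
      · intro p hp
        exact le_trans h1 (Finset.inf_le hp)
      · intro q hq
        have hx := le_trans h2 (Finset.inf_le hq)
        cases hIq : I q
        · decide
        · decide
        · rw [hIq] at hx; exact absurd hx (by decide)
    · rw [if_neg hh] at hle; exact absurd hle (by decide)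
  · rintro ⟨r, hr, hh, hp, hq⟩
    rw [Phi]
    have hb : TV3.unk ≤ (if r.head = a then (r.pos.inf K) ⊓ (r.neg.inf fun q => TV3.neg (I q)) else TV3.fls) := by
      rw [if_pos hh]
      refine le_inf (Finset.le_inf fun p hp' => hp p hp') (Finset.le_inf fun q hq' => ?_)
      have := hq q hq'
      cases hIq : I q
      · decide
      · decide
      · rw [hIq] at this; exact absurd this (by decide)
    exact le_trans hb (Finset.le_sup (f := fun r' => if r'.head = a then (r'.pos.inf K) ⊓ (r'.neg.inf fun q => TV3.neg (I q)) else TV3.fls) hr)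

lemma phi_mono_K (P : Program A) (I : A → TV3) {K K' : A → TV3} (h : K ≤ K') (a : A) :
    Phi P I K a ≤ Phi P I K' a := by
  rw [tv3_le_iff]
  constructor
  · intro ht
    rcases (phi_tru_iff P I K a).1 ht with ⟨r, hr, hh, hp, hq⟩
    exact (phi_tru_iff P I K' a).2 ⟨r, hr, hh, fun p hp' => tv3_tru_le ((hp p hp') ▸ h p), hq⟩
  · intro ht
    rcases (phi_unk_iff P I K a).1 ht with ⟨r, hr, hh, hp, hq⟩
    exact (phi_unk_iff P I K' a).2 ⟨r, hr, hh, fun p hp' => le_trans (hp p hp') (h p), hq⟩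

lemma bool_sup_true {β : Type*} {s : Finset β} {f : β → Bool} :
    s.sup f = true ↔ ∃ b ∈ s, f b = true := by
  constructor
  · intro h
    by_contra hc
    push_neg at hc
    have : s.sup f ≤ false := Finset.sup_le fun b hb => by
      cases hfb : f b
      · exact le_refl _
      · exact absurd hfb (hc b hb)
    rw [h] at this; exact absurd this (by decide)
  · rintro ⟨b, hb, hfb⟩
    exact le_antisymm (by cases s.sup f <;> simp) (hfb ▸ Finset.le_sup hb)

lemma bool_le_iff {x y : Bool} : x ≤ y ↔ (x = true → y = true) := by
  cases x <;> cases y <;> decide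

lemma phiB_true_iff (P : Program A) (J K : A → Bool) (a : A) :
    PhiB P J K a = true ↔
      ∃ r ∈ P, r.head = a ∧ (∀ p ∈ r.pos, K p = true) ∧ (∀ q ∈ r.neg, J q = false) := by
  rw [PhiB, bool_sup_true]
  constructor
  · rintro ⟨r, hr, hb⟩
    by_cases hh : r.head = a
    · rw [if_pos hh, Bool.and_eq_true] at hb
      refine ⟨r, hr, hh, ?_, ?_⟩
      · intro p hp
        have h1 : r.pos.inf K = true := hb.1
        have := Finset.inf_le (f := K) hp
        rw [h1] at this
        exact le_antisymm (by cases K p <;> simp) this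
      · intro q hq
        have h2 : (!r.neg.sup J) = true := hb.2
        rw [Bool.not_eq_true'] at h2
        have := Finset.le_sup (f := J) hq
        rw [h2] at this
        exact le_antisymm this (by cases J q <;> simp)
    · rw [if_neg hh] at hb; exact absurd hb (by decide)
  · rintro ⟨r, hr, hh, hp, hq⟩
    refine ⟨r, hr, ?_⟩
    rw [if_pos hh, Bool.and_eq_true]
    constructor
    · have : true ≤ r.pos.inf K := Finset.le_inf fun p hp' => le_of_eq (hp p hp').symm
      exact le_antisymm (by cases r.pos.inf K <;> simp) this
    · rw [Bool.not_eq_true']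
      have : r.neg.sup J ≤ false := Finset.sup_le fun q hq' => le_of_eq (hq q hq')
      exact le_antisymm this (by cases r.neg.sup J <;> simp)

lemma phiB_mono_K (P : Program A) (J : A → Bool) : Monotone (PhiB P J) := by
  intro K K' h a
  rw [bool_le_iff]
  intro ht
  rcases (phiB_true_iff P J K a).1 ht with ⟨r, hr, hh, hp, hq⟩
  refine (phiB_true_iff P J K' a).2 ⟨r, hr, hh, fun p hp' => ?_, hq⟩
  have := h p
  rw [hp p hp'] at this
  exact le_antisymm (by cases K' p <;> simp) this

noncomputable def GammaB (P : Program A) (J : A → Bool) : A → Bool :=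
  OrderHom.lfp ⟨PhiB P J, phiB_mono_K P J⟩

lemma gammaB_fix (P : Program A) (J : A → Bool) : PhiB P J (GammaB P J) = GammaB P J :=
  OrderHom.map_lfp (f := ⟨PhiB P J, phiB_mono_K P J⟩)

lemma gammaB_le (P : Program A) (J K : A → Bool) (h : PhiB P J K ≤ K) : GammaB P J ≤ K :=
  OrderHom.lfp_le (f := ⟨PhiB P J, phiB_mono_K P J⟩) h

lemma phiB_anti_J (P : Program A) {J J' : A → Bool} (h : J ≤ J') (K : A → Bool) :
    PhiB P J' K ≤ PhiB P J K := by
  intro a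
  rw [bool_le_iff]
  intro ht
  rcases (phiB_true_iff P J' K a).1 ht with ⟨r, hr, hh, hp, hq⟩
  refine (phiB_true_iff P J K a).2 ⟨r, hr, hh, hp, fun q hq' => ?_⟩
  have := h q
  rw [hq q hq'] at this
  exact le_antisymm this (by cases J q <;> simp)

lemma gammaB_anti (P : Program A) {J J' : A → Bool} (h : J ≤ J') :
    GammaB P J' ≤ GammaB P J := by
  apply gammaB_le
  calc PhiB P J' (GammaB P J) ≤ PhiB P J (GammaB P J) := phiB_anti_J P h _
  _ = GammaB P J := gammaB_fix P J

end Proof13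
section Walks
variable {A : Type*} [Fintype A] [DecidableEq A]
set_option linter.unusedSectionVars false

/-- Walks in a signed graph, indexed by length and number of negative arcs. -/
inductive PW (H : SGraph A) : A → A → ℕ → ℕ → Prop
  | refl (a : A) : PW H a a 0 0
  | cons {u v w : A} {s : Sign} {l k : ℕ} (h : H u v s) (hw : PW H v w l k) :
      PW H u w (l + 1) (k + if s = Sign.neg then 1 else 0)

lemma PW.append {H : SGraph A} {u v w : A} {l k l' k' : ℕ}
    (h1 : PW H u v l k) : PW H v w l' k' → PW H u w (l + l') (k + k') := by
  induction h1 with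
  | refl a => intro h2; simpa using h2
  | cons harc hw ih =>
      intro h2
      have h4 := PW.cons harc (ih h2)
      rw [Nat.add_right_comm _ 1 l', Nat.add_right_comm _ _ k']
      exact h4

lemma PW.toFun {H : SGraph A} {u v : A} {l k : ℕ} (h : PW H u v l k) :
    ∃ f : Fin (l+1) → A, ∃ g : Fin l → Sign, f 0 = u ∧ f (Fin.last l) = v ∧
      (∀ i : Fin l, H (f i.castSucc) (f i.succ) (g i)) ∧
      ((Finset.univ.filter fun i => g i = Sign.neg).card = k) := by
  induction h with
  | refl a => exact ⟨fun _ => a, Fin.elim0, rfl, rfl, fun i => i.elim0, by simp⟩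
  | @cons u v w s l k harc hw ih =>
    obtain ⟨f, g, h0, h1, harcs, hcard⟩ := ih
    refine ⟨Fin.cons u f, Fin.cons s g, Fin.cons_zero _ _, ?_, ?_, ?_⟩
    · rw [← Fin.succ_last, Fin.cons_succ]; exact h1
    · intro i
      refine Fin.cases ?_ ?_ i
      · rw [Fin.castSucc_zero, Fin.cons_zero]
        have : (0 : Fin (l+1)).succ = (Fin.succ 0 : Fin (l+2)) := rfl
        rw [this, Fin.cons_succ, Fin.cons_zero, h0]
        exact harc
      · intro j
        rw [Fin.cons_succ, ← Fin.succ_castSucc, Fin.cons_succ, Fin.cons_succ]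
        exact harcs j
    · rw [Finset.card_filter, Fin.sum_univ_succ, Fin.cons_zero]
      rw [Finset.card_filter] at hcard
      simp only [Fin.cons_succ]
      rw [hcard]
      omega

lemma PW.zero_inv {H : SGraph A} {u v : A} {k : ℕ} (h : PW H u v 0 k) : k = 0 := by
  cases h; rfl

/-- A closed walk in a graph without negative cycles has an even number of
negative arcs. -/
lemma PW.closed_even {G : SGraph A} (hno : NoNegCycle G) {u : A} {l k : ℕ}
    (h : PW G u u l k) : k % 2 = 0 := by
  match l, h with
  | 0, h => rw [h.zero_inv]
  | (n+1), h =>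
    by_contra hodd
    obtain ⟨f, g, h0, h1, harcs, hcard⟩ := h.toFun
    have harc' : ∀ i : Fin (n+1), G (f i.castSucc) (f (i+1).castSucc) (g i) := by
      intro i
      by_cases hi : (i : ℕ) < n
      · have he : (i+1).castSucc = i.succ := by
          have hv : ((i+1 : Fin (n+1)) : ℕ) = (i : ℕ) + 1 :=
            Fin.val_add_one_of_lt (by rw [Fin.lt_iff_val_lt_val]; simpa using hi)
          apply Fin.ext
          simp [hv]
        rw [he]; exact harcs i
      · have hi' : i = Fin.last n := by
          apply Fin.ext
          have := i.isLt
          simp only [Fin.val_last]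
          omega
        subst hi'
        rw [Fin.last_add_one, Fin.castSucc_zero, h0]
        have := harcs (Fin.last n)
        rwa [Fin.succ_last, h1] at this
    exact hno ⟨n, fun i => f i.castSucc, g, harc'⟩ (by
      show _ % 2 = 1
      rw [hcard]
      omega)

lemma exists_iter_fix {α : Type*} [PartialOrder α] [Finite α] {f : α → α}
    (hf : Monotone f) {x : α} (hx : x ≤ f x) : ∃ n, f (f^[n] x) = f^[n] x := by
  have hstep : ∀ n, f^[n] x ≤ f^[n+1] x := by
    intro n
    induction n with
    | zero => simpa using hx
    | succ n ih =>
        rw [Function.iterate_succ_apply', Function.iterate_succ_apply']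
        exact hf ih
  have hmono : Monotone fun n => f^[n] x := monotone_nat_of_le_succ hstep
  obtain ⟨m, m', hne, heq⟩ := Finite.exists_ne_map_eq_of_infinite (fun n => f^[n] x)
  rcases hne.lt_or_gt with hlt | hlt
  · refine ⟨m, ?_⟩
    have h5 : f^[m+1] x = f^[m] x :=
      le_antisymm (heq ▸ hmono (show m + 1 ≤ m' from hlt)) (hstep m)
    rwa [Function.iterate_succ_apply'] at h5
  · refine ⟨m', ?_⟩
    have h5 : f^[m'+1] x = f^[m'] x :=
      le_antisymm (heq ▸ hmono (show m' + 1 ≤ m from hlt)) (hstep m')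
    rwa [Function.iterate_succ_apply'] at h5

lemma iter_invariant {α : Type*} {f : α → α} {Q : α → Prop} {x : α}
    (hx : Q x) (hstep : ∀ y, Q y → Q (f y)) : ∀ n, Q (f^[n] x) := by
  intro n
  induction n with
  | zero => simpa using hx
  | succ n ih => rw [Function.iterate_succ_apply']; exact hstep _ ih

end Walks

section Walks2
variable {A : Type*} [Fintype A] [DecidableEq A]
set_option linter.unusedSectionVars false

lemma PW.mono {H G : SGraph A} (hsub : ∀ u v s, H u v s → G u v s) {u v : A} {l k : ℕ}
    (h : PW H u v l k) : PW G u v l k := by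
  induction h with
  | refl a => exact PW.refl a
  | cons harc hw ih => exact PW.cons (hsub _ _ _ harc) ih

lemma PW.src_unk {H : SGraph A} {I : A → TV3} {u v : A} {l k : ℕ}
    (hsrc : ∀ u v s, H u v s → I u = TV3.unk)
    (h : PW H u v l k) : u = v ∨ I u = TV3.unk := by
  cases h with
  | refl => exact Or.inl rfl
  | cons harc hw => exact Or.inr (hsrc _ _ _ harc)

end Walks2
section Graph
open Classical
variable {A : Type*} [Fintype A] [DecidableEq A]
set_option linter.unusedSectionVars false
set_option maxHeartbeats 1000000

/-- The "relevant" subgraph of the dependency graph on unknown atoms. -/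
def Harc (P : Program A) (I : A → TV3) : SGraph A := fun u v s =>
  I u = TV3.unk ∧ I v = TV3.unk ∧ ∃ r ∈ P, r.head = v ∧
    (∀ p ∈ r.pos, TV3.unk ≤ I p) ∧ (∀ q ∈ r.neg, I q ≤ TV3.unk) ∧
    ((s = Sign.pos ∧ u ∈ r.pos) ∨ (s = Sign.neg ∧ u ∈ r.neg))

lemma harc_dg {P : Program A} {I : A → TV3} {u v : A} {s : Sign}
    (h : Harc P I u v s) : dg P u v s := by
  obtain ⟨-, -, r, hr, hh, -, -, hd⟩ := h
  cases s with
  | pos =>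
      rcases hd with ⟨-, hu⟩ | ⟨hne, -⟩
      · exact ⟨r, hr, hh, hu⟩
      · exact absurd hne (by decide)
  | neg =>
      rcases hd with ⟨hne, -⟩ | ⟨-, hu⟩
      · exact absurd hne (by decide)
      · exact ⟨r, hr, hh, hu⟩

/-- Construction of a source strongly connected component of the relevant
subgraph, together with a consistent 2-coloring. -/
lemma exists_source_scc (P : Program A) (I : A → TV3) (hno : NoNegCycle (dg P))
    (hprev : ∀ v, I v = TV3.unk → ∃ u s, Harc P I u v s)
    (a₀ : A) (ha₀ : I a₀ = TV3.unk) :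
    ∃ (S : A → Prop) (σ : A → Bool),
      (∃ v, S v) ∧ (∀ v, S v → I v = TV3.unk) ∧
      (∀ u v s, Harc P I u v s → S v → S u) ∧
      (∀ u v s, Harc P I u v s → S v →
        ((s = Sign.pos ∧ σ u = σ v) ∨ (s = Sign.neg ∧ σ u = !σ v))) := by
  set H := Harc P I with hH
  have hclosed : ∀ u l k, PW H u u l k → k % 2 = 0 := by
    intro u l k hw
    exact PW.closed_even hno (hw.mono fun u v s h => harc_dg h)
  have hsrc : ∀ u v s, H u v s → I u = TV3.unk := fun u v s h => h.1
  have hg : ∀ a : {a // I a = TV3.unk}, ∃ b : {a // I a = TV3.unk}, ∃ s, H b.1 a.1 s := by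
    intro a
    obtain ⟨u, s, hu⟩ := hprev a.1 a.2
    exact ⟨⟨u, hu.1⟩, s, hu⟩
  choose g hgs using hg
  have hchain : ∀ (x : {a // I a = TV3.unk}) (n : ℕ), ∃ k, PW H (g^[n] x).1 x.1 n k := by
    intro x n
    induction n with
    | zero => exact ⟨0, PW.refl x.1⟩
    | succ n ih =>
        obtain ⟨k, hk⟩ := ih
        obtain ⟨s, hs⟩ := hgs (g^[n] x)
        refine ⟨k + if s = Sign.neg then 1 else 0, ?_⟩
        have hthis : PW H (g (g^[n] x)).1 x.1 (n+1) (k + if s = Sign.neg then 1 else 0) := by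
          have h2 := PW.append (PW.cons hs (PW.refl _)) hk
          have e1 : (0 : ℕ) + 1 + n = n + 1 := by omega
          have e2 : 0 + (if s = Sign.neg then 1 else 0) + k
              = k + (if s = Sign.neg then 1 else 0) := by omega
          rwa [e1, e2] at h2
        rw [Function.iterate_succ_apply']
        exact hthis
  have hcyc : ∀ x : {a // I a = TV3.unk}, ∃ y : {a // I a = TV3.unk},
      (∃ l k, PW H y.1 y.1 (l+1) k) ∧ (∃ l k, PW H y.1 x.1 l k) := by
    intro x
    obtain ⟨m, m', hne, heq⟩ := Finite.exists_ne_map_eq_of_infinite (fun n => g^[n] x)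
    have key : ∀ m m' : ℕ, m < m' → g^[m'] x = g^[m] x →
        ∃ y : {a // I a = TV3.unk},
        (∃ l k, PW H y.1 y.1 (l+1) k) ∧ (∃ l k, PW H y.1 x.1 l k) := by
      intro m m' hlt heq
      refine ⟨g^[m] x, ?_, ?_⟩
      · obtain ⟨k, hk⟩ := hchain (g^[m] x) (m' - m)
        have he : g^[m' - m] (g^[m] x) = g^[m] x := by
          rw [← Function.iterate_add_apply]
          have e3 : m' - m + m = m' := by omega
          rw [e3, heq]
        rw [he] at hk
        exact ⟨m' - m - 1, k, by
          have e4 : m' - m - 1 + 1 = m' - m := by omega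
          rwa [e4]⟩
      · obtain ⟨k, hk⟩ := hchain x m
        exact ⟨m, k, hk⟩
    rcases hne.lt_or_gt with hlt | hlt
    · exact key m m' hlt heq.symm
    · exact key m' m hlt heq
  let Anc : A → Finset A := fun v => Finset.univ.filter fun u => ∃ l k, PW H u v l k
  let Cset : Finset A := Finset.univ.filter fun v => ∃ l k, PW H v v (l+1) k
  have hCne : Cset.Nonempty := by
    obtain ⟨y, hy, -⟩ := hcyc ⟨a₀, ha₀⟩
    exact ⟨y.1, Finset.mem_filter.2 ⟨Finset.mem_univ _, hy⟩⟩
  obtain ⟨vs, hvsC, hvsmin⟩ := Finset.exists_min_image Cset (fun v => (Anc v).card) hCne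
  have hvs_cyc : ∃ l k, PW H vs vs (l+1) k := (Finset.mem_filter.1 hvsC).2
  have hvs_unk : I vs = TV3.unk := by
    obtain ⟨l, k, hw⟩ := hvs_cyc
    cases hw with
    | cons harc hw => exact harc.1
  set S : A → Prop := fun u => (∃ l k, PW H u vs l k) ∧ (∃ l k, PW H vs u l k) with hS
  have hSvs : S vs := ⟨⟨0, 0, PW.refl vs⟩, ⟨0, 0, PW.refl vs⟩⟩
  have hSunk : ∀ v, S v → I v = TV3.unk := by
    intro v hv
    obtain ⟨⟨l, k, hw⟩, -⟩ := hv
    rcases PW.src_unk (I := I) hsrc hw with h | h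
    · exact h ▸ hvs_unk
    · exact h
  have hSclosed : ∀ u v s, H u v s → S v → S u := by
    intro u v s harc hv
    have hu_unk : I u = TV3.unk := harc.1
    have hReach_u_vs : ∃ l k, PW H u vs l k := by
      obtain ⟨⟨l, k, hw⟩, -⟩ := hv
      exact ⟨l + 1, _, by
        have h5 := PW.append (PW.cons harc (PW.refl _)) hw
        have e1 : (0:ℕ) + 1 + l = l + 1 := by omega
        rwa [e1] at h5⟩
    obtain ⟨y, hy_cyc, hy_reach⟩ := hcyc ⟨u, hu_unk⟩
    have hyC : y.1 ∈ Cset := Finset.mem_filter.2 ⟨Finset.mem_univ _, hy_cyc⟩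
    have hsub : Anc y.1 ⊆ Anc vs := by
      intro z hz
      obtain ⟨l1, k1, hw1⟩ := (Finset.mem_filter.1 hz).2
      obtain ⟨l2, k2, hw2⟩ := hy_reach
      obtain ⟨l3, k3, hw3⟩ := hReach_u_vs
      exact Finset.mem_filter.2 ⟨Finset.mem_univ _, _, _, (hw1.append hw2).append hw3⟩
    have hcard : (Anc vs).card ≤ (Anc y.1).card := hvsmin y.1 hyC
    have heqA : Anc y.1 = Anc vs := Finset.eq_of_subset_of_card_le hsub hcard
    have hvs_in : vs ∈ Anc y.1 := by
      rw [heqA]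
      exact Finset.mem_filter.2 ⟨Finset.mem_univ _, 0, 0, PW.refl vs⟩
    obtain ⟨l4, k4, hw4⟩ := (Finset.mem_filter.1 hvs_in).2
    obtain ⟨l2, k2, hw2⟩ := hy_reach
    exact ⟨hReach_u_vs, _, _, hw4.append hw2⟩
  have hpar : ∀ u, S u → ∀ l k l' k', PW H u vs l k → PW H u vs l' k' →
      k % 2 = k' % 2 := by
    intro u hu l k l' k' hw hw'
    obtain ⟨-, lr, kr, hwr⟩ := hu
    have h1 := hclosed vs _ _ (hwr.append hw)
    have h2 := hclosed vs _ _ (hwr.append hw')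
    omega
  set σ : A → Bool := fun u => decide (∃ l k, PW H u vs l k ∧ k % 2 = 1) with hσ
  have hσspec : ∀ u, S u → ∀ l k, PW H u vs l k → (σ u = true ↔ k % 2 = 1) := by
    intro u hu l k hw
    rw [hσ]
    simp only [decide_eq_true_iff]
    constructor
    · rintro ⟨l', k', hw', hk'⟩
      have := hpar u hu l' k' l k hw' hw
      omega
    · intro hk
      exact ⟨l, k, hw, hk⟩
  refine ⟨S, σ, ⟨vs, hSvs⟩, hSunk, hSclosed, ?_⟩
  intro u v s harc hv
  have hu : S u := hSclosed u v s harc hv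
  obtain ⟨l, k, hw⟩ := hv.1
  have hw' : PW H u vs (l+1) (k + if s = Sign.neg then 1 else 0) := by
    have h5 := PW.append (PW.cons harc (PW.refl _)) hw
    have e1 : (0:ℕ) + 1 + l = l + 1 := by omega
    have e2 : 0 + (if s = Sign.neg then 1 else 0) + k
        = k + (if s = Sign.neg then 1 else 0) := by omega
    rwa [e1, e2] at h5
  have hv_iff := hσspec v hv l k hw
  have hu_iff := hσspec u hu _ _ hw'
  cases s with
  | pos =>
      refine Or.inl ⟨rfl, ?_⟩
      rw [if_neg (show ¬ (Sign.pos = Sign.neg) by decide)] at hu_iff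
      by_cases hk : k % 2 = 1
      · rw [hv_iff.2 hk, hu_iff.2 (by omega)]
      · have h1 : σ v = false := by
          cases hc : σ v
          · rfl
          · exact absurd (hv_iff.1 hc) hk
        have h2 : σ u = false := by
          cases hc : σ u
          · rfl
          · exact absurd (hu_iff.1 hc) (by omega)
        rw [h1, h2]
  | neg =>
      refine Or.inr ⟨rfl, ?_⟩
      rw [if_pos rfl] at hu_iff
      by_cases hk : k % 2 = 1
      · have h1 := hv_iff.2 hk
        have h2 : σ u = false := by
          cases hc : σ u
          · rfl
          · exact absurd (hu_iff.1 hc) (by omega)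
        rw [h1, h2]
        rfl
      · have h1 : σ v = false := by
          cases hc : σ v
          · rfl
          · exact absurd (hv_iff.1 hc) hk
        have h2 : σ u = true := hu_iff.2 (by omega)
        rw [h1, h2]
        rfl

end Graph
section Main
open Classical
variable {A : Type*} [Fintype A] [DecidableEq A]
set_option linter.unusedSectionVars false
set_option maxHeartbeats 1000000

lemma tv3_fls_le (x : TV3) : TV3.fls ≤ x := by cases x <;> decide

lemma stable_of_pair (P : Program A) (X Y : A → Bool) (hXY : X ≤ Y)
    (hX : X = GammaB P Y) (hY : Y = GammaB P X) :
    IsStablePartial P (fun b => if X b then TV3.tru else if Y b then TV3.unk else TV3.fls) := by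
  set I' : A → TV3 := fun b => if X b then TV3.tru else if Y b then TV3.unk else TV3.fls with hI'
  have hfixX : PhiB P Y X = X := by rw [hX]; exact gammaB_fix P Y
  have hfixY : PhiB P X Y = Y := by rw [hY]; exact gammaB_fix P X
  have hIdef : ∀ b, (X b = true ∧ Y b = true ∧ I' b = TV3.tru) ∨
      (X b = false ∧ Y b = true ∧ I' b = TV3.unk) ∨
      (X b = false ∧ Y b = false ∧ I' b = TV3.fls) := by
    intro b
    cases hx : X b
    · cases hy : Y b
      · exact Or.inr (Or.inr ⟨rfl, rfl, by rw [hI']; simp [hx, hy]⟩)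
      · exact Or.inr (Or.inl ⟨rfl, rfl, by rw [hI']; simp [hx, hy]⟩)
    · have hy : Y b = true := by
        have := hXY b
        rw [hx] at this
        exact le_antisymm (by cases Y b <;> simp) this
      exact Or.inl ⟨rfl, hy, by rw [hI']; simp [hx]⟩
  have hItru : ∀ b, I' b = TV3.tru ↔ X b = true := by
    intro b
    rcases hIdef b with ⟨h1, h2, h3⟩ | ⟨h1, h2, h3⟩ | ⟨h1, h2, h3⟩ <;> rw [h1, h3] <;> simp
  have hIfls : ∀ b, I' b = TV3.fls ↔ Y b = false := by
    intro b
    rcases hIdef b with ⟨h1, h2, h3⟩ | ⟨h1, h2, h3⟩ | ⟨h1, h2, h3⟩ <;> rw [h2, h3] <;> simp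
  have hIunk : ∀ b, TV3.unk ≤ I' b ↔ Y b = true := by
    intro b
    rcases hIdef b with ⟨h1, h2, h3⟩ | ⟨h1, h2, h3⟩ | ⟨h1, h2, h3⟩ <;> rw [h2, h3] <;> simp <;> decide
  have hIleunk : ∀ b, I' b ≤ TV3.unk ↔ X b = false := by
    intro b
    rcases hIdef b with ⟨h1, h2, h3⟩ | ⟨h1, h2, h3⟩ | ⟨h1, h2, h3⟩ <;> rw [h1, h3] <;> simp <;> decide
  constructor
  · -- prefixpoint
    intro a
    rw [tv3_le_iff]
    constructor
    · intro ht
      obtain ⟨r, hr, hh, hp, hq⟩ := (phi_tru_iff P I' I' a).1 ht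
      have : PhiB P Y X a = true := (phiB_true_iff P Y X a).2
        ⟨r, hr, hh, fun p hp' => (hItru p).1 (hp p hp'),
          fun q hq' => (hIfls q).1 (hq q hq')⟩
      rw [hfixX] at this
      exact (hItru a).2 this
    · intro ht
      obtain ⟨r, hr, hh, hp, hq⟩ := (phi_unk_iff P I' I' a).1 ht
      have : PhiB P X Y a = true := (phiB_true_iff P X Y a).2
        ⟨r, hr, hh, fun p hp' => (hIunk p).1 (hp p hp'),
          fun q hq' => (hIleunk q).1 (hq q hq')⟩
      rw [hfixY] at this
      exact (hIunk a).2 this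
  · -- leastness
    intro K hK
    set tpK : A → Bool := fun b => decide (K b = TV3.tru) with htpK
    set nfK : A → Bool := fun b => decide (K b ≠ TV3.fls) with hnfK
    have h1 : PhiB P Y tpK ≤ tpK := by
      intro b
      rw [bool_le_iff]
      intro ht
      obtain ⟨r, hr, hh, hp, hq⟩ := (phiB_true_iff P Y tpK b).1 ht
      have hphi : Phi P I' K b = TV3.tru := (phi_tru_iff P I' K b).2
        ⟨r, hr, hh, fun p hp' => by
            have := hp p hp'
            rw [htpK] at this
            exact of_decide_eq_true this,
          fun q hq' => (hIfls q).2 (hq q hq')⟩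
      have := hK b
      rw [hphi] at this
      rw [htpK]
      exact decide_eq_true (tv3_tru_le this)
    have h2 : PhiB P X nfK ≤ nfK := by
      intro b
      rw [bool_le_iff]
      intro ht
      obtain ⟨r, hr, hh, hp, hq⟩ := (phiB_true_iff P X nfK b).1 ht
      have hphi : TV3.unk ≤ Phi P I' K b := (phi_unk_iff P I' K b).2
        ⟨r, hr, hh, fun p hp' => by
            have := hp p hp'
            rw [hnfK] at this
            exact tv3_unk_le.2 (of_decide_eq_true this),
          fun q hq' => (hIleunk q).2 (hq q hq')⟩
      have hub := le_trans hphi (hK b)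
      rw [hnfK]
      exact decide_eq_true (tv3_unk_le.1 hub)
    have hXle : X ≤ tpK := hX ▸ gammaB_le P Y tpK h1
    have hYle : Y ≤ nfK := hY ▸ gammaB_le P X nfK h2
    intro b
    rcases hIdef b with ⟨hx, hy, h3⟩ | ⟨hx, hy, h3⟩ | ⟨hx, hy, h3⟩
    · rw [h3]
      have h5 := hXle b
      rw [hx] at h5
      have h6 : tpK b = true := le_antisymm (by cases hc : tpK b <;> simp [hc]) h5
      have h7 : K b = TV3.tru := by
        rw [htpK] at h6
        simpa using h6
      rw [h7]
    · rw [h3]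
      have h5 := hYle b
      rw [hy] at h5
      have h6 : nfK b = true := le_antisymm (by cases hc : nfK b <;> simp [hc]) h5
      have h7 : K b ≠ TV3.fls := by
        rw [hnfK] at h6
        simpa using h6
      exact tv3_unk_le.2 h7
    · rw [h3]
      exact tv3_fls_le _
end Main
set_option maxHeartbeats 4000000 in
open Classical in
/-- if the dependency graph has no negative cycle, every regular
model is 2-valued. -/
theorem stmt13 {A : Type*} [Fintype A] [DecidableEq A] (P : Program A)
    (h : NoNegCycle (dg P)) :
    ∀ I : A → TV3, IsRegularModel P I → Is2Valued I := by
  rintro I ⟨⟨hpre, hleast⟩, hmin⟩ a ha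
  have hfix : ∀ b, Phi P I I b = I b := by
    intro b
    exact le_antisymm (hpre b) (hleast (Phi P I I) (fun c => phi_mono_K P I (fun d => hpre d) c) b)
  have hprev : ∀ v, I v = TV3.unk → ∃ u s, Harc P I u v s := by
    intro v hv
    have h1 : TV3.unk ≤ Phi P I I v := by rw [hfix v, hv]
    obtain ⟨r, hr, hh, hp, hq⟩ := (phi_unk_iff P I I v).1 h1
    by_cases hcase : ∀ p ∈ r.pos, I p = TV3.tru
    · by_cases hcase2 : ∀ q ∈ r.neg, I q = TV3.fls
      · exfalso
        have h2 : Phi P I I v = TV3.tru := (phi_tru_iff P I I v).2 ⟨r, hr, hh, hcase, hcase2⟩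
        rw [hfix v, hv] at h2
        exact absurd h2 (by decide)
      · push_neg at hcase2
        obtain ⟨q, hq', hqne⟩ := hcase2
        have hqu : I q = TV3.unk := by
          have h3 := hq q hq'
          cases hc : I q
          · exact absurd hc hqne
          · rfl
          · rw [hc] at h3; exact absurd h3 (by decide)
        exact ⟨q, Sign.neg, hqu, hv, r, hr, hh, hp, hq, Or.inr ⟨rfl, hq'⟩⟩
    · push_neg at hcase
      obtain ⟨p, hp', hpne⟩ := hcase
      have hpu : I p = TV3.unk := by
        have h3 := hp p hp'
        cases hc : I p
        · rw [hc] at h3; exact absurd h3 (by decide)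
        · rfl
        · exact absurd hc hpne
      exact ⟨p, Sign.pos, hpu, hv, r, hr, hh, hp, hq, Or.inl ⟨rfl, hp'⟩⟩
  obtain ⟨S, σ, ⟨v0, hv0⟩, hSunk, hSclosed, hScol⟩ := exists_source_scc P I h hprev a ha
  set tpI : A → Bool := fun b => decide (I b = TV3.tru) with htpI
  set nfI : A → Bool := fun b => decide (I b ≠ TV3.fls) with hnfI
  set X0 : A → Bool := fun b => decide (I b = TV3.tru ∨ (S b ∧ σ b = true)) with hX0
  set Y0 : A → Bool := fun b => decide (I b ≠ TV3.fls ∧ ¬ (S b ∧ σ b = false)) with hY0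
  have htpIt : ∀ b, tpI b = true ↔ I b = TV3.tru := by intro b; rw [htpI]; simp only [decide_eq_true_eq]
  have hnfIt : ∀ b, nfI b = true ↔ I b ≠ TV3.fls := by intro b; rw [hnfI]; simp only [decide_eq_true_eq]
  have hX0t : ∀ b, X0 b = true ↔ (I b = TV3.tru ∨ (S b ∧ σ b = true)) := by
    intro b; rw [hX0]; simp only [decide_eq_true_eq]
  have hY0t : ∀ b, Y0 b = true ↔ (I b ≠ TV3.fls ∧ ¬ (S b ∧ σ b = false)) := by
    intro b; rw [hY0]; simp only [decide_eq_true_eq]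
  -- leastness transfer: the true part is contained in GammaB of the nonfalse part
  have hC1 : tpI ≤ GammaB P nfI := by
    set L : A → Bool := GammaB P nfI with hL
    have hfixL : PhiB P nfI L = L := by rw [hL]; exact gammaB_fix P nfI
    set K : A → TV3 := fun b => if L b = true then TV3.tru else TV3.unk with hK
    have hKt : ∀ b, L b = true → K b = TV3.tru := by intro b hb; rw [hK]; simp [hb]
    have hKu : ∀ b, ¬ (L b = true) → K b = TV3.unk := by intro b hb; rw [hK]; simp [hb]
    have hKpre : ∀ b, Phi P I K b ≤ K b := by
      intro b
      by_cases hLb : L b = true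
      · rw [hKt b hLb]; exact le_top
      · rw [hKu b hLb, tv3_le_unk]
        intro hcon
        obtain ⟨r, hr, hh, hp, hq⟩ := (phi_tru_iff P I K b).1 hcon
        have hPB : PhiB P nfI L b = true := by
          refine (phiB_true_iff P nfI L b).2 ⟨r, hr, hh, ?_, ?_⟩
          · intro p hp'
            by_cases hLp : L p = true
            · exact hLp
            · exfalso
              have h4 := hKu p hLp
              rw [hp p hp'] at h4
              exact absurd h4 (by decide)
          · intro q hq'
            have h4 := hq q hq'
            rw [hnfI]
            simp [h4]
        rw [hfixL] at hPB
        exact absurd hPB hLb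
    have h5 := hleast K hKpre
    intro b
    rw [bool_le_iff]
    intro hb
    have h6 := h5 b
    rw [(htpIt b).1 hb] at h6
    by_contra hLb
    rw [hKu b hLb] at h6
    exact absurd h6 (by decide)
  have hY0nf : Y0 ≤ nfI := by
    intro b
    rw [bool_le_iff]
    intro hb
    exact (hnfIt b).2 ((hY0t b).1 hb).1
  have htpIL2 : tpI ≤ GammaB P Y0 := le_trans hC1 (gammaB_anti P hY0nf)
  set L2 : A → Bool := GammaB P Y0 with hL2
  have hfixL2 : PhiB P Y0 L2 = L2 := by rw [hL2]; exact gammaB_fix P Y0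
  -- step (i): the chosen colour class is derivable
  have hTL2 : ∀ b, S b → σ b = true → L2 b = true := by
    intro b0 hSb0 hσb0
    by_contra hLb0
    set D : A → Prop := fun b => S b ∧ σ b = true ∧ ¬ (L2 b = true) with hD
    set K2 : A → TV3 := fun b => if D b then TV3.fls else I b with hK2
    have hK2d : ∀ b, D b → K2 b = TV3.fls := by intro b hdb; rw [hK2]; exact if_pos hdb
    have hK2nd : ∀ b, ¬ D b → K2 b = I b := by intro b hdb; rw [hK2]; exact if_neg hdb
    have hK2leI : ∀ b, K2 b ≤ I b := by
      intro b
      by_cases hdb : D b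
      · rw [hK2d b hdb]; exact tv3_fls_le _
      · rw [hK2nd b hdb]
    have hnotpre : ¬ ∀ c, Phi P I K2 c ≤ K2 c := by
      intro hcon2
      have h7 := hleast K2 hcon2 b0
      rw [hK2d b0 ⟨hSb0, hσb0, hLb0⟩, hSunk b0 hSb0] at h7
      exact absurd h7 (by decide)
    push_neg at hnotpre
    obtain ⟨c, hc⟩ := hnotpre
    have hDc : D c := by
      by_contra hndc
      have hle2 : Phi P I K2 c ≤ K2 c := by
        rw [hK2nd c hndc]
        calc Phi P I K2 c ≤ Phi P I I c := phi_mono_K P I (fun d => hK2leI d) c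
        _ = I c := hfix c
      exact absurd hle2 (not_le_of_gt hc)
    have hcunk : I c = TV3.unk := hSunk c hDc.1
    have hunkle : TV3.unk ≤ Phi P I K2 c := by
      rw [hK2d c hDc] at hc
      rw [tv3_unk_le]
      intro hfls
      rw [hfls] at hc
      exact absurd hc (lt_irrefl _)
    obtain ⟨r, hr, hh, hp, hq⟩ := (phi_unk_iff P I K2 c).1 hunkle
    have hposI : ∀ p ∈ r.pos, TV3.unk ≤ I p := fun p hp' => le_trans (hp p hp') (hK2leI p)
    have harc_of : ∀ u, I u = TV3.unk →
        ((u ∈ r.pos → Harc P I u c Sign.pos) ∧ (u ∈ r.neg → Harc P I u c Sign.neg)) := by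
      intro u hu
      exact ⟨fun hm => ⟨hu, hcunk, r, hr, hh, hposI, hq, Or.inl ⟨rfl, hm⟩⟩,
             fun hm => ⟨hu, hcunk, r, hr, hh, hposI, hq, Or.inr ⟨rfl, hm⟩⟩⟩
    have hPB : PhiB P Y0 L2 c = true := by
      refine (phiB_true_iff P Y0 L2 c).2 ⟨r, hr, hh, ?_, ?_⟩
      · intro p hp'
        have hKp := hp p hp'
        have hndp : ¬ D p := by
          intro hdp
          rw [hK2d p hdp] at hKp
          exact absurd hKp (by decide)
        have hIp : TV3.unk ≤ I p := hposI p hp'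
        cases hc2 : I p with
        | fls => rw [hc2] at hIp; exact absurd hIp (by decide)
        | tru => exact bool_le_iff.1 (htpIL2 p) ((htpIt p).2 hc2)
        | unk =>
            have harc := (harc_of p hc2).1 hp'
            have hSp : S p := hSclosed p c Sign.pos harc hDc.1
            have hσp : σ p = σ c := by
              rcases hScol p c Sign.pos harc hDc.1 with ⟨-, he⟩ | ⟨hne, -⟩
              · exact he
              · exact absurd hne (by decide)
            rw [hDc.2.1] at hσp
            by_contra hL2p
            exact hndp ⟨hSp, hσp, hL2p⟩
      · intro q hq'
        have hIq := hq q hq'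
        cases hc2 : I q with
        | tru => rw [hc2] at hIq; exact absurd hIq (by decide)
        | fls =>
            cases hY0c : Y0 q with
            | false => rfl
            | true => exact absurd hc2 ((hY0t q).1 hY0c).1
        | unk =>
            have harc := (harc_of q hc2).2 hq'
            have hSq : S q := hSclosed q c Sign.neg harc hDc.1
            have hσq : σ q = !σ c := by
              rcases hScol q c Sign.neg harc hDc.1 with ⟨hne, -⟩ | ⟨-, he⟩
              · exact absurd hne (by decide)
              · exact he
            rw [hDc.2.1] at hσq
            cases hY0c : Y0 q with
            | false => rfl
            | true => exact absurd ⟨hSq, by rw [hσq]; rfl⟩ ((hY0t q).1 hY0c).2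
    rw [hfixL2] at hPB
    exact hDc.2.2 hPB
  have hstep_i : X0 ≤ L2 := by
    intro b
    rw [bool_le_iff]
    intro hb
    rcases (hX0t b).1 hb with hbt | ⟨hSb, hσb⟩
    · exact bool_le_iff.1 (htpIL2 b) ((htpIt b).2 hbt)
    · exact hTL2 b hSb hσb
  -- step (ii)
  have hstep_ii : GammaB P X0 ≤ Y0 := by
    apply gammaB_le
    intro c
    rw [bool_le_iff]
    intro ht
    obtain ⟨r, hr, hh, hp, hq⟩ := (phiB_true_iff P X0 Y0 c).1 ht
    have hposI : ∀ p ∈ r.pos, TV3.unk ≤ I p := by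
      intro p hp'
      exact tv3_unk_le.2 ((hY0t p).1 (hp p hp')).1
    have hnegI : ∀ q ∈ r.neg, I q ≤ TV3.unk := by
      intro q hq'
      rw [tv3_le_unk]
      intro hqt
      have h8 : X0 q = true := (hX0t q).2 (Or.inl hqt)
      rw [hq q hq'] at h8
      exact absurd h8 (by simp)
    have hcnf : TV3.unk ≤ I c := by
      rw [← hfix c]
      exact (phi_unk_iff P I I c).2 ⟨r, hr, hh, hposI, hnegI⟩
    refine (hY0t c).2 ⟨tv3_unk_le.1 hcnf, ?_⟩
    rintro ⟨hSc, hσc⟩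
    have hcunk : I c = TV3.unk := hSunk c hSc
    have harc_of : ∀ u, I u = TV3.unk →
        ((u ∈ r.pos → Harc P I u c Sign.pos) ∧ (u ∈ r.neg → Harc P I u c Sign.neg)) := by
      intro u hu
      exact ⟨fun hm => ⟨hu, hcunk, r, hr, hh, hposI, hnegI, Or.inl ⟨rfl, hm⟩⟩,
             fun hm => ⟨hu, hcunk, r, hr, hh, hposI, hnegI, Or.inr ⟨rfl, hm⟩⟩⟩
    have hpt : ∀ p ∈ r.pos, I p = TV3.tru := by
      intro p hp'
      cases hc2 : I p with
      | tru => rfl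
      | fls => exact absurd hc2 ((hY0t p).1 (hp p hp')).1
      | unk =>
          have harc := (harc_of p hc2).1 hp'
          have hSp := hSclosed p c Sign.pos harc hSc
          have hσp : σ p = σ c := by
            rcases hScol p c Sign.pos harc hSc with ⟨-, he⟩ | ⟨hne, -⟩
            · exact he
            · exact absurd hne (by decide)
          rw [hσc] at hσp
          exact absurd ⟨hSp, hσp⟩ ((hY0t p).1 (hp p hp')).2
    have hqf : ∀ q ∈ r.neg, I q = TV3.fls := by
      intro q hq'
      cases hc2 : I q with
      | fls => rfl
      | tru =>
          have h9 := (hX0t q).2 (Or.inl hc2)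
          rw [hq q hq'] at h9
          exact absurd h9 (by simp)
      | unk =>
          have harc := (harc_of q hc2).2 hq'
          have hSq := hSclosed q c Sign.neg harc hSc
          have hσq : σ q = !σ c := by
            rcases hScol q c Sign.neg harc hSc with ⟨hne, -⟩ | ⟨-, he⟩
            · exact absurd hne (by decide)
            · exact he
          rw [hσc] at hσq
          have h9 : X0 q = true := (hX0t q).2 (Or.inr ⟨hSq, by rw [hσq]; rfl⟩)
          rw [hq q hq'] at h9
          exact absurd h9 (by simp)
    have h10 : Phi P I I c = TV3.tru := (phi_tru_iff P I I c).2 ⟨r, hr, hh, hpt, hqf⟩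
    rw [hfix c, hcunk] at h10
    exact absurd h10 (by decide)
  have hX0Y0 : X0 ≤ Y0 := by
    intro b
    rw [bool_le_iff]
    intro hb
    rcases (hX0t b).1 hb with hbt | ⟨hSb, hσb⟩
    · refine (hY0t b).2 ⟨by rw [hbt]; decide, ?_⟩
      rintro ⟨hSb2, -⟩
      have h11 := hSunk b hSb2
      rw [hbt] at h11
      exact absurd h11 (by decide)
    · refine (hY0t b).2 ⟨by rw [hSunk b hSb]; decide, ?_⟩
      rintro ⟨-, hσb2⟩
      rw [hσb] at hσb2
      exact absurd hσb2 (by simp)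
  -- iterate to a fixpoint pair
  set G2 : (A → Bool) → (A → Bool) := fun Z => GammaB P (GammaB P Z) with hG2
  have hG2mono : Monotone G2 := fun Z Z' hZZ => gammaB_anti P (gammaB_anti P hZZ)
  have hpost : X0 ≤ G2 X0 := le_trans hstep_i (gammaB_anti P hstep_ii)
  obtain ⟨n, hn⟩ := exists_iter_fix hG2mono hpost
  set Xf : A → Bool := G2^[n] X0 with hXf
  set Yf : A → Bool := GammaB P Xf with hYf
  have hXfeq : Xf = GammaB P Yf := by
    rw [hYf, hXf]
    exact hn.symm
  have hX0Xf : X0 ≤ Xf := by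
    rw [hXf]
    exact iter_invariant (Q := fun y => X0 ≤ y) (le_refl X0)
      (fun y hy => le_trans hpost (hG2mono hy)) n
  have hXfYf : Xf ≤ Yf := by
    rw [hXf, hYf, hXf]
    exact iter_invariant (Q := fun y => y ≤ GammaB P y)
      (le_trans hstep_i (gammaB_anti P hX0Y0))
      (fun y hy => gammaB_anti P (gammaB_anti P hy)) n
  have hYfY0 : Yf ≤ Y0 := by
    rw [hYf]
    calc GammaB P Xf ≤ GammaB P X0 := gammaB_anti P hX0Xf
    _ ≤ Y0 := hstep_ii
  set I' : A → TV3 := fun b => if Xf b then TV3.tru else if Yf b then TV3.unk else TV3.fls with hI'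
  have hstable' : IsStablePartial P I' := stable_of_pair P Xf Yf hXfYf hXfeq hYf
  have hle : leSI I' I := by
    intro b
    cases hc : I b with
    | unk => exact Or.inr rfl
    | tru =>
        left
        have h12 : Xf b = true := bool_le_iff.1 (hX0Xf b) ((hX0t b).2 (Or.inl hc))
        rw [hI']
        simp [h12]
    | fls =>
        left
        have hY0b : Y0 b = false := by
          cases hcY : Y0 b
          · rfl
          · exact absurd hc ((hY0t b).1 hcY).1
        have hYfb : Yf b = false := by
          cases hcY : Yf b
          · rfl
          · have h13 := bool_le_iff.1 (hYfY0 b) hcY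
            rw [hY0b] at h13
            exact absurd h13 (by simp)
        have hXfb : Xf b = false := by
          cases hcX : Xf b
          · rfl
          · have h13 := bool_le_iff.1 (hXfYf b) hcX
            rw [hYfb] at h13
            exact absurd h13 (by simp)
        rw [hI']
        simp [hXfb, hYfb]
  have heq := hmin I' hstable' hle
  have hIv0 : I v0 = TV3.unk := hSunk v0 hv0
  cases hσv : σ v0 with
  | true =>
      have hXv : Xf v0 = true := bool_le_iff.1 (hX0Xf v0) ((hX0t v0).2 (Or.inr ⟨hv0, hσv⟩))
      have h14 : I' v0 = TV3.tru := by rw [hI']; simp [hXv]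
      rw [heq, hIv0] at h14
      exact absurd h14 (by decide)
  | false =>
      have hY0v : Y0 v0 = false := by
        cases hcY : Y0 v0
        · rfl
        · exact absurd ⟨hv0, hσv⟩ ((hY0t v0).1 hcY).2
      have hYfv : Yf v0 = false := by
        cases hcY : Yf v0
        · rfl
        · have h13 := bool_le_iff.1 (hYfY0 v0) hcY
          rw [hY0v] at h13
          exact absurd h13 (by simp)
      have hXfv : Xf v0 = false := by
        cases hcX : Xf v0
        · rfl
        · have h13 := bool_le_iff.1 (hXfYf v0) hcX
          rw [hYfv] at h13
          exact absurd h13 (by simp)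
      have h14 : I' v0 = TV3.fls := by rw [hI']; simp [hXfv, hYfv]
      rw [heq, hIv0] at h14
      exact absurd h14 (by decide)
end
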